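/- arXiv:1011.3507 — 4 statements merged into one kernel-verified Lean document; each statement's English description precedes it below -/
import Mathlib

section
/- Let C be a triangulated category carrying a bounded weight structure w and a bounded t-structure t satisfying condition (iv) of Theorem 1.1 (for every X ∈ Heart(t) and every i ∈ ℤ there exists a nice weight decomposition of X at level i). Then for every i ∈ ℤ there exist exact functors L_i, R_i : Heart(t) → Heart(t) and natural transformations L_i ⟶ Id_{Heart(t)} ⟶ R_i such that for every X ∈ Heart(t): L_iX ∈ C^{w≤i}, R_iX ∈ C^{w≥i+1}, and the sequence 0 → L_iX → X → R_iX → 0 is a short exact sequence in Heart(t). -/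
/-!
Choose a nice weight decomposition `A_X → X → B_X` of every object `X` of the heart. Since the
`A`'s lie in `C^{t≤0} ∩ C^{w≤i}` and the `B`'s in `C^{t≥0} ∩ C^{w≥i+1}`, we have
`Hom(A_X, B_Y) = 0` by orthogonality of `w` and `Hom(A_X[1], B_Y) = 0` by orthogonality of `t`.
Hence every morphism `X → Y` lifts uniquely to `A_X → A_Y` and descends uniquely to
`B_X → B_Y`, which makes `L = A_-` and `R = B_-` functors.

For exactness, let `X → Y → Z → X[1]` be a distinguished triangle in the heart, `Q` a cone of
`A_X → A_Y` and `c : Q → Z` a map completing the morphism of triangles. The lift `e : Q → A_Z`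
of `c` is an isomorphism: `a_Z` factors through `c`, which gives a section of `e`, and an
endomorphism of `Q` killed by `c` vanishes (this uses `Hom(A_X[1], Z) = 0`). Hence
`A_X → A_Y → A_Z` is distinguished. Dually, a fibre of `B_Y → B_Z` is isomorphic to `B_X`.
The octahedral axiom is never needed.
-/

open CategoryTheory CategoryTheory.Limits CategoryTheory.Pretriangulated

universe v u

namespace WT

variable (C : Type u) [Category.{v} C] [Preadditive C] [HasZeroObject C]
  [HasShift C ℤ] [∀ n : ℤ, (shiftFunctor C n).Additive] [Pretriangulated C]

/-- `D ⊥ E`: every morphism from an object of `D` to an object of `E` vanishes. -/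
def Perp (D E : Set C) : Prop :=
  ∀ ⦃X : C⦄, X ∈ D → ∀ ⦃Y : C⦄, Y ∈ E → ∀ f : X ⟶ Y, f = 0

/-- The shift `D[n]` of a class of objects: objects isomorphic to `Y⟦n⟧` for `Y ∈ D`. -/
def shiftClass (D : Set C) (n : ℤ) : Set C :=
  {X : C | ∃ Y ∈ D, Nonempty (X ≅ (Y⟦n⟧ : C))}

/-- A class of objects is extension-stable if for any distinguished triangle
`A → B → C' → A⟦1⟧` with `A, C' ∈ D` one has `B ∈ D`. -/
def ExtensionStable (D : Set C) : Prop :=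
  ∀ (T : Triangle C), T ∈ (distTriang C) → T.obj₁ ∈ D → T.obj₃ ∈ D → T.obj₂ ∈ D

/-- The envelope of a class of objects: the smallest extension-stable class containing it. -/
def envelope (F : Set C) : Set C :=
  ⋂₀ {D : Set C | ExtensionStable C D ∧ F ⊆ D}

/-- A class of objects corresponding to a strictly full triangulated subcategory. -/
structure IsTriangulatedClass (S : Set C) : Prop where
  isoClosed : ∀ ⦃X Y : C⦄, (X ≅ Y) → X ∈ S → Y ∈ S
  shift : ∀ (n : ℤ) (X : C), X ∈ S → (X⟦n⟧ : C) ∈ S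
  ext : ExtensionStable C S

/-- The smallest strictly full triangulated subcategory (as a class of objects)
containing a given class of objects. -/
def triangulatedHull (F : Set C) : Set C :=
  ⋂₀ {S : Set C | IsTriangulatedClass C S ∧ F ⊆ S}

/-- A family `(A i)` of classes of objects is semi-orthogonal if
`Hom(X, Y⟦s⟧) = 0` for `X ∈ A i`, `Y ∈ A j` whenever `s < 0` or `s > i - j`. -/
def SemiOrthogonal (A : ℤ → Set C) : Prop :=
  ∀ i j s : ℤ, (s < 0 ∨ i - j < s) →
    ∀ ⦃X : C⦄, X ∈ A i → ∀ ⦃Y : C⦄, Y ∈ A j → ∀ f : X ⟶ (Y⟦s⟧ : C), f = 0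

/-- Strong semi-orthogonality: semi-orthogonality together with `A i ⊥ A j` for `i ≠ j`. -/
def StronglySemiOrthogonal (A : ℤ → Set C) : Prop :=
  SemiOrthogonal C A ∧ ∀ i j : ℤ, i ≠ j → Perp C (A i) (A j)

/-- The family `(A i)` is generating: the smallest strictly full triangulated subcategory
containing all the `A i` is the whole category. -/
def IsGenerating (A : ℤ → Set C) : Prop :=
  ∀ X : C, X ∈ triangulatedHull C (⋃ i : ℤ, A i)

end WT

namespace WT

/-- A category is abelian semi-simple if it carries an abelian structure for which every
object is a finite direct sum of simple objects. -/
def IsSemisimpleAbelian (B : Type*) [Category B] : Prop :=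
  ∃ inst : Abelian B,
    haveI := inst
    haveI : HasFiniteBiproducts B := Abelian.hasFiniteBiproducts
    ∀ X : B, ∃ (n : ℕ) (f : Fin n → B),
      (∀ l, Simple (f l)) ∧ Nonempty (X ≅ ⨁ f)

variable (C : Type u) [Category.{v} C] [Preadditive C] [HasZeroObject C]
  [HasShift C ℤ] [∀ n : ℤ, (shiftFunctor C n).Additive] [Pretriangulated C]

/-- A bounded t-structure, given by the classes `C^{t≤0}` and `C^{t≥0}`. -/
structure BoundedTStructure where
  le : Set C
  ge : Set C
  le_shift : ∀ X ∈ le, (X⟦(1 : ℤ)⟧ : C) ∈ le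
  ge_shift : ∀ X ∈ ge, (X⟦(-1 : ℤ)⟧ : C) ∈ ge
  orth : ∀ X ∈ le, ∀ Y ∈ ge, ∀ f : X ⟶ (Y⟦(-1 : ℤ)⟧ : C), f = 0
  decomp : ∀ X : C, ∃ (A B : C) (f : A ⟶ X) (g : X ⟶ B) (h : B ⟶ (A⟦(1 : ℤ)⟧ : C)),
    Triangle.mk f g h ∈ (distTriang C) ∧ A ∈ le ∧ B ∈ shiftClass C ge (-1)
  bounded_le : ∀ X : C, ∃ i : ℤ, X ∈ shiftClass C le (-i)
  bounded_ge : ∀ X : C, ∃ j : ℤ, X ∈ shiftClass C ge (-j)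

variable {C}

/-- `C^{t≤i} := C^{t≤0}[-i]`. -/
def BoundedTStructure.tle (t : BoundedTStructure C) (i : ℤ) : Set C :=
  shiftClass C t.le (-i)

/-- `C^{t≥i} := C^{t≥0}[-i]`. -/
def BoundedTStructure.tge (t : BoundedTStructure C) (i : ℤ) : Set C :=
  shiftClass C t.ge (-i)

/-- The heart of a t-structure. -/
def BoundedTStructure.heart (t : BoundedTStructure C) : Set C :=
  t.le ∩ t.ge

variable (C)

/-- A bounded weight structure (sign convention of the paper), given by the classes
`C^{w≤0}` and `C^{w≥0}`. -/
structure BoundedWeightStructure [HasBinaryBiproducts C] where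
  le : Set C
  ge : Set C
  le_sum : ∀ X ∈ le, ∀ Y ∈ le, (X ⊞ Y : C) ∈ le
  ge_sum : ∀ X ∈ ge, ∀ Y ∈ ge, (X ⊞ Y : C) ∈ ge
  le_retract : ∀ ⦃X Y : C⦄, (∃ (s : X ⟶ Y) (r : Y ⟶ X), s ≫ r = 𝟙 X) → Y ∈ le → X ∈ le
  ge_retract : ∀ ⦃X Y : C⦄, (∃ (s : X ⟶ Y) (r : Y ⟶ X), s ≫ r = 𝟙 X) → Y ∈ ge → X ∈ ge
  le_shift : ∀ X ∈ le, (X⟦(-1 : ℤ)⟧ : C) ∈ le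
  ge_shift : ∀ X ∈ ge, (X⟦(1 : ℤ)⟧ : C) ∈ ge
  orth : ∀ X ∈ le, ∀ Y ∈ ge, ∀ f : X ⟶ (Y⟦(1 : ℤ)⟧ : C), f = 0
  decomp : ∀ X : C, ∃ (A B : C) (f : A ⟶ X) (g : X ⟶ B) (h : B ⟶ (A⟦(1 : ℤ)⟧ : C)),
    Triangle.mk f g h ∈ (distTriang C) ∧ A ∈ le ∧ B ∈ shiftClass C ge 1
  bounded_le : ∀ X : C, ∃ i : ℤ, X ∈ shiftClass C le i
  bounded_ge : ∀ X : C, ∃ j : ℤ, X ∈ shiftClass C ge j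

variable {C} [HasBinaryBiproducts C]

/-- `C^{w≤i} := C^{w≤0}[i]`. -/
def BoundedWeightStructure.wle (w : BoundedWeightStructure C) (i : ℤ) : Set C :=
  shiftClass C w.le i

/-- `C^{w≥i} := C^{w≥0}[i]`. -/
def BoundedWeightStructure.wge (w : BoundedWeightStructure C) (i : ℤ) : Set C :=
  shiftClass C w.ge i

/-- A nice weight decomposition of `X` at level `i`: a weight decomposition
`w_{≤i}X → X → w_{≥i+1}X` all three of whose terms lie in the heart of `t`. -/
def NiceDecomposition (w : BoundedWeightStructure C) (t : BoundedTStructure C)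
    (i : ℤ) (X : C) : Prop :=
  ∃ (A B : C) (f : A ⟶ X) (g : X ⟶ B) (h : B ⟶ (A⟦(1 : ℤ)⟧ : C)),
    Triangle.mk f g h ∈ (distTriang C) ∧ A ∈ w.wle i ∧ B ∈ w.wge (i + 1) ∧
      A ∈ t.heart ∧ X ∈ t.heart ∧ B ∈ t.heart

/-- Condition (iv) of Theorem 1.1: every object of the heart of `t` admits a nice
weight decomposition at every level. -/
def ConditionIV (w : BoundedWeightStructure C) (t : BoundedTStructure C) : Prop :=
  ∀ X ∈ t.heart, ∀ i : ℤ, NiceDecomposition w t i X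

/-- The heart of `t` as a full subcategory. -/
abbrev Heart (t : BoundedTStructure C) := ObjectProperty.FullSubcategory (fun X : C => X ∈ t.heart)

/-- A morphism in the heart, viewed as a morphism of the ambient category. -/
def homC {P : C → Prop} {X Y : ObjectProperty.FullSubcategory P} (f : X ⟶ Y) : X.obj ⟶ Y.obj := f.hom

/-- `0 → X → Y → Z → 0` is a short exact sequence in the heart of `t`; equivalently,
all three objects lie in the heart and the pair of morphisms extends to a
distinguished triangle. -/
def HeartSES (t : BoundedTStructure C) {X Y Z : C} (f : X ⟶ Y) (g : Y ⟶ Z) : Prop :=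
  X ∈ t.heart ∧ Y ∈ t.heart ∧ Z ∈ t.heart ∧
    ∃ h : Z ⟶ (X⟦(1 : ℤ)⟧ : C), Triangle.mk f g h ∈ (distTriang C)

/-- A functor from the heart to itself is exact if it preserves short exact sequences. -/
def HeartExact (t : BoundedTStructure C) (F : Heart t ⥤ Heart t) : Prop :=
  ∀ (X Y Z : Heart t) (f : X ⟶ Y) (g : Y ⟶ Z),
    HeartSES t (homC f) (homC g) → HeartSES t (homC (F.map f)) (homC (F.map g))

end WT

namespace CategoryTheory

variable {C : Type u} [Category.{v} C]

lemma hom_eq_zero_of_iso [HasZeroMorphisms C] {X X' Y Y' : C} (eX : X ≅ X') (eY : Y ≅ Y')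
    (h : ∀ g : X' ⟶ Y', g = 0) (f : X ⟶ Y) : f = 0 := by
  simpa using eX.hom ≫= h (eX.inv ≫ f ≫ eY.hom) =≫ eY.inv

variable [Preadditive C] [HasShift C ℤ] [∀ n : ℤ, (CategoryTheory.shiftFunctor C n).Additive]

lemma shift_hom_eq_zero {X Y : C} (n : ℤ) (h : ∀ g : X ⟶ Y, g = 0) (f : X⟦n⟧ ⟶ Y⟦n⟧) :
    f = 0 := by
  obtain ⟨g, rfl⟩ := (shiftFunctor C n).map_surjective f
  rw [h g, Functor.map_zero]

variable [HasZeroObject C] [Pretriangulated C]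

namespace Pretriangulated.Triangle

variable (T : Triangle C)

lemma eq_zero_of_comp_mor₁_eq_zero (hT : T ∈ distTriang C) {W : C}
    (hW : ∀ g : W ⟶ T.obj₃⟦(-1 : ℤ)⟧, g = 0) {f : W ⟶ T.obj₁} (hf : f ≫ T.mor₁ = 0) : f = 0 := by
  obtain ⟨g, rfl⟩ := coyoneda_exact₂ _ (inv_rot_of_distTriang _ hT) f hf
  obtain rfl := hW g
  exact zero_comp

lemma eq_zero_of_comp_shift_mor₁_eq_zero (hT : T ∈ distTriang C) {W : C}
    (hW : ∀ g : W ⟶ T.obj₃, g = 0) {f : W ⟶ T.obj₁⟦(1 : ℤ)⟧}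
    (hf : f ≫ T.mor₁⟦(1 : ℤ)⟧' = 0) : f = 0 := by
  obtain ⟨g, rfl⟩ := coyoneda_exact₁ _ hT f hf
  obtain rfl := hW g
  exact zero_comp

lemma eq_zero_of_mor₂_comp_eq_zero (hT : T ∈ distTriang C) {V : C}
    (hV : ∀ g : T.obj₁⟦(1 : ℤ)⟧ ⟶ V, g = 0) {f : T.obj₃ ⟶ V} (hf : T.mor₂ ≫ f = 0) : f = 0 := by
  obtain ⟨g, rfl⟩ := yoneda_exact₃ _ hT f hf
  obtain rfl := hV g
  exact comp_zero

lemma yoneda_exact₁ (hT : T ∈ distTriang C) {V : C} (f : T.obj₁ ⟶ V)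
    (hf : T.mor₃ ≫ f⟦(1 : ℤ)⟧' = 0) : ∃ g : T.obj₂ ⟶ V, f = T.mor₁ ≫ g := by
  obtain ⟨g, hg⟩ : ∃ g : T.obj₂⟦(1 : ℤ)⟧ ⟶ V⟦(1 : ℤ)⟧, f⟦(1 : ℤ)⟧' = (-T.mor₁⟦(1 : ℤ)⟧') ≫ g :=
    yoneda_exact₃ _ (rot_of_distTriang _ hT) _ hf
  obtain ⟨g, rfl⟩ := (CategoryTheory.shiftFunctor C (1 : ℤ)).map_surjective g
  refine ⟨-g, (CategoryTheory.shiftFunctor C (1 : ℤ)).map_injective ?_⟩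
  rw [Functor.map_comp, Functor.map_neg, Preadditive.comp_neg, hg, Preadditive.neg_comp]

end Pretriangulated.Triangle

end CategoryTheory

namespace WT

variable {C : Type u} [Category.{v} C] [Preadditive C] [HasZeroObject C]
  [HasShift C ℤ] [∀ n : ℤ, (shiftFunctor C n).Additive] [Pretriangulated C]

lemma BoundedTStructure.hom_shift_le_ge_eq_zero (t : BoundedTStructure C) {P G : C}
    (hP : P ∈ t.le) (hG : G ∈ t.ge) (f : P⟦(1 : ℤ)⟧ ⟶ G) : f = 0 := by
  rw [← (shiftFunctor C (-1 : ℤ)).map_eq_zero_iff]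
  exact hom_eq_zero_of_iso ((shiftFunctorCompIsoId C (1 : ℤ) (-1) (by simp)).app P) (Iso.refl _)
    (t.orth P hP G hG) _

variable [HasBinaryBiproducts C]

namespace BoundedWeightStructure

variable (w : BoundedWeightStructure C)

lemma hom_le_shift_ge_eq_zero {P : C} (hP : P ∈ w.le) {n : ℤ} (hn : 1 ≤ n) :
    ∀ G ∈ w.ge, ∀ f : P ⟶ G⟦n⟧, f = 0 := by
  induction n, hn using Int.leInduction with
  | base => exact fun G hG => w.orth P hP G hG
  | succ n _ ih =>
    exact fun G hG => hom_eq_zero_of_iso (Iso.refl P)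
      ((shiftFunctorAdd' C 1 n (n + 1) (by ring)).app G) (ih _ (w.ge_shift G hG))

lemma hom_wle_wge_eq_zero {a b : ℤ} (hab : a < b) {X Y : C} (hX : X ∈ w.wle a)
    (hY : Y ∈ w.wge b) (f : X ⟶ Y) : f = 0 := by
  obtain ⟨P, hP, ⟨eX⟩⟩ := hX
  obtain ⟨G, hG, ⟨eY⟩⟩ := hY
  exact hom_eq_zero_of_iso eX (eY ≪≫ (shiftFunctorAdd' C (b - a) a b (by ring)).app G)
    (shift_hom_eq_zero a (w.hom_le_shift_ge_eq_zero hP (n := b - a) (by omega) G hG)) f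

lemma shift_mem_wge {Y : C} {b : ℤ} (hY : Y ∈ w.wge b) : Y⟦(1 : ℤ)⟧ ∈ w.wge (b + 1) := by
  obtain ⟨G, hG, ⟨e⟩⟩ := hY
  exact ⟨G, hG, ⟨(shiftFunctor C (1 : ℤ)).mapIso e ≪≫
    ((shiftFunctorAdd' C b 1 (b + 1) rfl).app G).symm⟩⟩

end BoundedWeightStructure

structure NiceDecompositionData (w : BoundedWeightStructure C) (t : BoundedTStructure C)
    (i : ℤ) (X : C) where
  A : C
  B : C
  a : A ⟶ X
  b : X ⟶ B
  d : B ⟶ A⟦(1 : ℤ)⟧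
  dist : Triangle.mk a b d ∈ distTriang C
  A_mem_wle : A ∈ w.wle i
  B_mem_wge : B ∈ w.wge (i + 1)
  A_mem_heart : A ∈ t.heart
  B_mem_heart : B ∈ t.heart

variable {w : BoundedWeightStructure C} {t : BoundedTStructure C} {i : ℤ}

lemma NiceDecomposition.nonempty_data {X : C} (h : NiceDecomposition w t i X) :
    Nonempty (NiceDecompositionData w t i X) := by
  obtain ⟨A, B, a, b, d, hd, hA, hB, hAt, -, hBt⟩ := h
  exact ⟨⟨A, B, a, b, d, hd, hA, hB, hAt, hBt⟩⟩

namespace NiceDecompositionData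

variable {X Y Z : C} (DX : NiceDecompositionData w t i X) (DY : NiceDecompositionData w t i Y)
  (DZ : NiceDecompositionData w t i Z)

lemma hom_A_B_eq_zero (g : DX.A ⟶ DY.B) : g = 0 :=
  w.hom_wle_wge_eq_zero (lt_add_one i) DX.A_mem_wle DY.B_mem_wge g

lemma hom_A_shift_B_eq_zero (g : DX.A ⟶ DY.B⟦(1 : ℤ)⟧) : g = 0 :=
  w.hom_wle_wge_eq_zero (by omega : i < i + 1 + 1) DX.A_mem_wle (w.shift_mem_wge DY.B_mem_wge) g

lemma cancel_a {W : C} (hW : W ∈ t.le) {f f' : W ⟶ DY.A} (h : f ≫ DY.a = f' ≫ DY.a) :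
    f = f' :=
  sub_eq_zero.1 (Triangle.eq_zero_of_comp_mor₁_eq_zero _ DY.dist
    (t.orth W hW DY.B DY.B_mem_heart.2)
    (by rw [Preadditive.sub_comp, h, sub_self] : (f - f') ≫ DY.a = 0))

lemma cancel_b {V : C} (hV : V ∈ t.ge) {f f' : DX.B ⟶ V} (h : DX.b ≫ f = DX.b ≫ f') :
    f = f' :=
  sub_eq_zero.1 (Triangle.eq_zero_of_mor₂_comp_eq_zero _ DX.dist
    (t.hom_shift_le_ge_eq_zero DX.A_mem_heart.1 hV)
    (by rw [Preadditive.comp_sub, h, sub_self] : DX.b ≫ (f - f') = 0))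

noncomputable def lift (f : X ⟶ Y) : DX.A ⟶ DY.A :=
  (Triangle.coyoneda_exact₂ _ DY.dist (DX.a ≫ f) (DX.hom_A_B_eq_zero DY _)).choose

lemma lift_comp_a (f : X ⟶ Y) : DX.lift DY f ≫ DY.a = DX.a ≫ f :=
  (Triangle.coyoneda_exact₂ _ DY.dist (DX.a ≫ f) (DX.hom_A_B_eq_zero DY _)).choose_spec.symm

lemma lift_id : DX.lift DX (𝟙 X) = 𝟙 DX.A :=
  DX.cancel_a DX.A_mem_heart.1 (by rw [lift_comp_a, Category.comp_id, Category.id_comp])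

lemma lift_comp (f : X ⟶ Y) (g : Y ⟶ Z) :
    DX.lift DZ (f ≫ g) = DX.lift DY f ≫ DY.lift DZ g :=
  DZ.cancel_a DX.A_mem_heart.1 (by
    rw [lift_comp_a, Category.assoc, lift_comp_a, ← Category.assoc, ← Category.assoc, lift_comp_a])

noncomputable def desc (f : X ⟶ Y) : DX.B ⟶ DY.B :=
  (Triangle.yoneda_exact₂ _ DX.dist (f ≫ DY.b)
    ((Category.assoc _ _ _).symm.trans (DX.hom_A_B_eq_zero DY _))).choose

lemma b_comp_desc (f : X ⟶ Y) : DX.b ≫ DX.desc DY f = f ≫ DY.b :=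
  (Triangle.yoneda_exact₂ _ DX.dist (f ≫ DY.b)
    ((Category.assoc _ _ _).symm.trans (DX.hom_A_B_eq_zero DY _))).choose_spec.symm

lemma desc_id : DX.desc DX (𝟙 X) = 𝟙 DX.B :=
  DX.cancel_b DX.B_mem_heart.2 (by rw [b_comp_desc, Category.comp_id, Category.id_comp])

lemma desc_comp (f : X ⟶ Y) (g : Y ⟶ Z) :
    DX.desc DZ (f ≫ g) = DX.desc DY f ≫ DY.desc DZ g :=
  DX.cancel_b DZ.B_mem_heart.2 (by
    rw [b_comp_desc, ← Category.assoc, b_comp_desc, Category.assoc f DY.b, b_comp_desc,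
      Category.assoc])

lemma exists_comp_shift_a_eq (φ : DZ.A ⟶ X⟦(1 : ℤ)⟧) :
    ∃ h : DZ.A ⟶ DX.A⟦(1 : ℤ)⟧, h ≫ DX.a⟦(1 : ℤ)⟧' = φ := by
  obtain ⟨g, hg⟩ : ∃ g : DZ.A ⟶ DX.A⟦(1 : ℤ)⟧, φ = g ≫ (-DX.a⟦(1 : ℤ)⟧') := by
    refine Triangle.coyoneda_exact₁ _ (rot_of_distTriang _ DX.dist) φ ?_
    change φ ≫ DX.b⟦(1 : ℤ)⟧' = 0
    exact DZ.hom_A_shift_B_eq_zero DX _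
  exact ⟨-g, by rw [hg, Preadditive.neg_comp, Preadditive.comp_neg]⟩

section Cone

variable {DX DY DZ} {u : X ⟶ Y} {v : Y ⟶ Z} {δ : Z ⟶ X⟦(1 : ℤ)⟧} {Q : C}

lemma hom_cone_B_eq_zero {f : DX.A ⟶ DY.A} {p : DY.A ⟶ Q} {r : Q ⟶ DX.A⟦(1 : ℤ)⟧}
    (hQ : Triangle.mk f p r ∈ distTriang C) {W : C} (D : NiceDecompositionData w t i W)
    (g : Q ⟶ D.B) : g = 0 :=
  Triangle.eq_zero_of_mor₂_comp_eq_zero _ hQ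
    (t.hom_shift_le_ge_eq_zero DX.A_mem_heart.1 D.B_mem_heart.2) (DY.hom_A_B_eq_zero D (p ≫ g))

variable {p : DY.A ⟶ Q} {r : Q ⟶ DX.A⟦(1 : ℤ)⟧} {c : Q ⟶ Z}

lemma cone_hom_eq_zero_of_comp_eq_zero (hT : Triangle.mk u v δ ∈ distTriang C)
    (hQ : Triangle.mk (DX.lift DY u) p r ∈ distTriang C) (hc₁ : p ≫ c = DY.a ≫ v)
    (hc₂ : r ≫ DX.a⟦(1 : ℤ)⟧' = c ≫ δ) {W : C} (hW : W ∈ t.le)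
    (hWB : ∀ g : W ⟶ DX.B, g = 0) {φ : W ⟶ Q} (hφ : φ ≫ c = 0) : φ = 0 := by
  have hr : φ ≫ r = 0 := by
    refine Triangle.eq_zero_of_comp_shift_mor₁_eq_zero _ DX.dist hWB ?_
    change (φ ≫ r) ≫ DX.a⟦(1 : ℤ)⟧' = 0
    rw [Category.assoc, hc₂, ← Category.assoc, hφ, zero_comp]
  obtain ⟨ψ, rfl⟩ : ∃ ψ : W ⟶ DY.A, φ = ψ ≫ p := Triangle.coyoneda_exact₃ _ hQ φ hr
  obtain ⟨χ, hχ⟩ : ∃ χ : W ⟶ X, ψ ≫ DY.a = χ ≫ u := by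
    refine Triangle.coyoneda_exact₂ _ hT (ψ ≫ DY.a) ?_
    change (ψ ≫ DY.a) ≫ v = 0
    rw [Category.assoc, ← hc₁, ← Category.assoc, hφ]
  obtain ⟨ξ, rfl⟩ : ∃ ξ : W ⟶ DX.A, χ = ξ ≫ DX.a :=
    Triangle.coyoneda_exact₂ _ DX.dist χ (hWB _)
  have hψ : ψ = ξ ≫ DX.lift DY u :=
    DY.cancel_a hW (by rw [hχ, Category.assoc, Category.assoc, lift_comp_a])
  have hLp : DX.lift DY u ≫ p = 0 := comp_distTriang_mor_zero₁₂ _ hQ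
  rw [hψ, Category.assoc, hLp, comp_zero]

lemma cone_endo_eq_zero_of_comp_eq_zero (hT : Triangle.mk u v δ ∈ distTriang C)
    (hZ : Z ∈ t.ge) (hQ : Triangle.mk (DX.lift DY u) p r ∈ distTriang C)
    (hc₁ : p ≫ c = DY.a ≫ v) (hc₂ : r ≫ DX.a⟦(1 : ℤ)⟧' = c ≫ δ) {θ : Q ⟶ Q}
    (hθ : θ ≫ c = 0) : θ = 0 := by
  have hpθ : p ≫ θ = 0 := cone_hom_eq_zero_of_comp_eq_zero hT hQ hc₁ hc₂ DY.A_mem_heart.1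
    (DY.hom_A_B_eq_zero DX) (by rw [Category.assoc, hθ, comp_zero])
  obtain ⟨χ, rfl⟩ : ∃ χ : DX.A⟦(1 : ℤ)⟧ ⟶ Q, θ = r ≫ χ := Triangle.yoneda_exact₃ _ hQ θ hpθ
  rw [cone_hom_eq_zero_of_comp_eq_zero hT hQ hc₁ hc₂ (t.le_shift _ DX.A_mem_heart.1)
    (t.hom_shift_le_ge_eq_zero DX.A_mem_heart.1 DX.B_mem_heart.2)
    (t.hom_shift_le_ge_eq_zero DX.A_mem_heart.1 hZ (χ ≫ c)), comp_zero]

lemma exists_comp_eq_a_of_cone (hT : Triangle.mk u v δ ∈ distTriang C)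
    (hQ : Triangle.mk (DX.lift DY u) p r ∈ distTriang C) (hc₁ : p ≫ c = DY.a ≫ v)
    (hc₂ : r ≫ DX.a⟦(1 : ℤ)⟧' = c ≫ δ) {h : DZ.A ⟶ DX.A⟦(1 : ℤ)⟧}
    (hh : h ≫ DX.a⟦(1 : ℤ)⟧' = DZ.a ≫ δ) : ∃ s : DZ.A ⟶ Q, s ≫ c = DZ.a := by
  have hδu : δ ≫ u⟦(1 : ℤ)⟧' = 0 := comp_distTriang_mor_zero₃₁ _ hT
  have hh₀ : h ≫ (DX.lift DY u)⟦(1 : ℤ)⟧' = 0 := by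
    refine Triangle.eq_zero_of_comp_shift_mor₁_eq_zero _ DY.dist (DZ.hom_A_B_eq_zero DY) ?_
    change (h ≫ (DX.lift DY u)⟦(1 : ℤ)⟧') ≫ DY.a⟦(1 : ℤ)⟧' = 0
    rw [Category.assoc, ← Functor.map_comp, lift_comp_a, Functor.map_comp, ← Category.assoc, hh,
      Category.assoc, hδu, comp_zero]
  obtain ⟨s₀, hs₀⟩ : ∃ s₀ : DZ.A ⟶ Q, h = s₀ ≫ r := Triangle.coyoneda_exact₁ _ hQ h hh₀
  obtain ⟨κ, hκ⟩ : ∃ κ : DZ.A ⟶ Y, DZ.a - s₀ ≫ c = κ ≫ v := by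
    refine Triangle.coyoneda_exact₃ _ hT (DZ.a - s₀ ≫ c) ?_
    change (DZ.a - s₀ ≫ c) ≫ δ = 0
    rw [Preadditive.sub_comp, Category.assoc, ← hc₂, ← Category.assoc, ← hs₀, hh, sub_self]
  obtain ⟨σ, rfl⟩ : ∃ σ : DZ.A ⟶ DY.A, κ = σ ≫ DY.a :=
    Triangle.coyoneda_exact₂ _ DY.dist κ (DZ.hom_A_B_eq_zero DY _)
  refine ⟨s₀ + σ ≫ p, ?_⟩
  rw [Preadditive.add_comp, Category.assoc, hc₁, ← Category.assoc, ← hκ, add_sub_cancel]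

end Cone

theorem exists_distinguished_lift {u : X ⟶ Y} {v : Y ⟶ Z} {δ : Z ⟶ X⟦(1 : ℤ)⟧}
    (hT : Triangle.mk u v δ ∈ distTriang C) (hZ : Z ∈ t.ge) :
    ∃ h, Triangle.mk (DX.lift DY u) (DY.lift DZ v) h ∈ distTriang C := by
  obtain ⟨h, hh⟩ := exists_comp_shift_a_eq DX DZ (DZ.a ≫ δ)
  obtain ⟨Q, p, r, hQ⟩ := distinguished_cocone_triangle (DX.lift DY u)
  obtain ⟨c, hc₁, hc₂⟩ : ∃ c : Q ⟶ Z, p ≫ c = DY.a ≫ v ∧ r ≫ DX.a⟦(1 : ℤ)⟧' = c ≫ δ :=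
    complete_distinguished_triangle_morphism _ _ hQ hT DX.a DY.a (DX.lift_comp_a DY u)
  obtain ⟨e, he⟩ : ∃ e : Q ⟶ DZ.A, c = e ≫ DZ.a :=
    Triangle.coyoneda_exact₂ _ DZ.dist c (hom_cone_B_eq_zero hQ DZ _)
  obtain ⟨s, hs⟩ := exists_comp_eq_a_of_cone hT hQ hc₁ hc₂ hh
  have hse : s ≫ e = 𝟙 DZ.A :=
    DZ.cancel_a DZ.A_mem_heart.1 (by rw [Category.assoc, ← he, hs, Category.id_comp])
  have hes : e ≫ s = 𝟙 Q := sub_eq_zero.1 (cone_endo_eq_zero_of_comp_eq_zero hT hZ hQ hc₁ hc₂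
    (by rw [Preadditive.sub_comp, Category.assoc, hs, ← he, Category.id_comp, sub_self]))
  have hpe : p ≫ e = DY.lift DZ v :=
    DZ.cancel_a DY.A_mem_heart.1 (by rw [Category.assoc, ← he, hc₁, lift_comp_a])
  have heh : e ≫ h = r := by
    refine sub_eq_zero.1 (Triangle.eq_zero_of_comp_shift_mor₁_eq_zero _ DX.dist
      (hom_cone_B_eq_zero hQ DX) ?_)
    change (e ≫ h - r) ≫ DX.a⟦(1 : ℤ)⟧' = 0
    rw [Preadditive.sub_comp, Category.assoc, hh, ← Category.assoc, ← he, hc₂, sub_self]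
  refine ⟨h, isomorphic_distinguished _ hQ _
    (Triangle.isoMk _ _ (Iso.refl _) (Iso.refl _) ⟨s, e, hse, hes⟩ ?_ ?_ ?_)⟩
  · exact (Category.comp_id _).trans (Category.id_comp _).symm
  · change DY.lift DZ v ≫ s = 𝟙 DY.A ≫ p
    rw [← hpe, Category.assoc, hes, Category.comp_id, Category.id_comp]
  · change h ≫ (𝟙 DX.A)⟦(1 : ℤ)⟧' = s ≫ r
    rw [CategoryTheory.Functor.map_id, Category.comp_id, ← heh, ← Category.assoc, hse,
      Category.id_comp]

lemma exists_b_comp_eq (φ : Z ⟶ DX.B⟦(1 : ℤ)⟧) :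
    ∃ h : DZ.B ⟶ DX.B⟦(1 : ℤ)⟧, DZ.b ≫ h = φ := by
  obtain ⟨h, hh⟩ : ∃ h : DZ.B ⟶ DX.B⟦(1 : ℤ)⟧, φ = DZ.b ≫ h :=
    Triangle.yoneda_exact₂ _ DZ.dist φ (DZ.hom_A_shift_B_eq_zero DX _)
  exact ⟨h, hh.symm⟩

section Fiber

variable {DX DY DZ} {u : X ⟶ Y} {v : Y ⟶ Z} {δ : Z ⟶ X⟦(1 : ℤ)⟧} {K : C}

lemma hom_A_fiber_eq_zero {k : K ⟶ DY.B} {f : DY.B ⟶ DZ.B} {k₃ : DZ.B ⟶ K⟦(1 : ℤ)⟧}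
    (hK : Triangle.mk k f k₃ ∈ distTriang C) {W : C} (D : NiceDecompositionData w t i W)
    (g : D.A ⟶ K) : g = 0 :=
  Triangle.eq_zero_of_comp_mor₁_eq_zero _ hK (t.orth _ D.A_mem_heart.1 _ DZ.B_mem_heart.2)
    (D.hom_A_B_eq_zero DY (g ≫ k))

variable {k : K ⟶ DY.B} {k₃ : DZ.B ⟶ K⟦(1 : ℤ)⟧} {c : X ⟶ K}

lemma fiber_hom_eq_zero_of_comp_eq_zero (hT : Triangle.mk u v δ ∈ distTriang C)
    (hK : Triangle.mk k (DY.desc DZ v) k₃ ∈ distTriang C) (hc₁ : u ≫ DY.b = c ≫ k)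
    (hc₂ : δ ≫ c⟦(1 : ℤ)⟧' = DZ.b ≫ k₃) {V : C} (hV : V ∈ t.ge)
    (hAV : ∀ g : DZ.A ⟶ V, g = 0) {φ : K ⟶ V} (hφ : c ≫ φ = 0) : φ = 0 := by
  have h₃ : k₃ ≫ φ⟦(1 : ℤ)⟧' = 0 := by
    refine Triangle.eq_zero_of_mor₂_comp_eq_zero _ DZ.dist (shift_hom_eq_zero 1 hAV) ?_
    change DZ.b ≫ k₃ ≫ φ⟦(1 : ℤ)⟧' = 0
    rw [← Category.assoc, ← hc₂, Category.assoc, ← Functor.map_comp, hφ, Functor.map_zero,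
      comp_zero]
  obtain ⟨ψ, rfl⟩ : ∃ ψ : DY.B ⟶ V, φ = k ≫ ψ := Triangle.yoneda_exact₁ _ hK φ h₃
  obtain ⟨χ, hχ⟩ : ∃ χ : Z ⟶ V, DY.b ≫ ψ = v ≫ χ := by
    refine Triangle.yoneda_exact₂ _ hT (DY.b ≫ ψ) ?_
    change u ≫ DY.b ≫ ψ = 0
    rw [← Category.assoc, hc₁, Category.assoc, hφ]
  obtain ⟨ξ, rfl⟩ : ∃ ξ : DZ.B ⟶ V, χ = DZ.b ≫ ξ :=
    Triangle.yoneda_exact₂ _ DZ.dist χ (hAV _)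
  have hψ : ψ = DY.desc DZ v ≫ ξ :=
    DY.cancel_b hV (by rw [hχ, ← Category.assoc, ← b_comp_desc, Category.assoc])
  have hkf : k ≫ DY.desc DZ v = 0 := comp_distTriang_mor_zero₁₂ _ hK
  rw [hψ, ← Category.assoc, hkf, zero_comp]

lemma fiber_endo_eq_zero_of_comp_eq_zero (hT : Triangle.mk u v δ ∈ distTriang C)
    (hX : X ∈ t.le) (hK : Triangle.mk k (DY.desc DZ v) k₃ ∈ distTriang C)
    (hc₁ : u ≫ DY.b = c ≫ k) (hc₂ : δ ≫ c⟦(1 : ℤ)⟧' = DZ.b ≫ k₃) {θ : K ⟶ K}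
    (hθ : c ≫ θ = 0) : θ = 0 := by
  have hθk : θ ≫ k = 0 := fiber_hom_eq_zero_of_comp_eq_zero hT hK hc₁ hc₂ DY.B_mem_heart.2
    (DZ.hom_A_B_eq_zero DY) (by rw [← Category.assoc, hθ, zero_comp])
  obtain ⟨χ, rfl⟩ : ∃ χ : K ⟶ DZ.B⟦(-1 : ℤ)⟧,
      θ = χ ≫ (Triangle.mk k (DY.desc DZ v) k₃).invRotate.mor₁ :=
    Triangle.coyoneda_exact₂ _ (inv_rot_of_distTriang _ hK) θ hθk
  obtain rfl := fiber_hom_eq_zero_of_comp_eq_zero hT hK hc₁ hc₂ (t.ge_shift _ DZ.B_mem_heart.2)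
    (t.orth _ DZ.A_mem_heart.1 _ DZ.B_mem_heart.2) (t.orth _ hX _ DZ.B_mem_heart.2 (c ≫ χ))
  exact zero_comp

lemma exists_comp_eq_b_of_fiber (hT : Triangle.mk u v δ ∈ distTriang C)
    (hK : Triangle.mk k (DY.desc DZ v) k₃ ∈ distTriang C) (hc₁ : u ≫ DY.b = c ≫ k)
    (hc₂ : δ ≫ c⟦(1 : ℤ)⟧' = DZ.b ≫ k₃) {h : DZ.B ⟶ DX.B⟦(1 : ℤ)⟧}
    (hh : DZ.b ≫ h = δ ≫ DX.b⟦(1 : ℤ)⟧') : ∃ s : K ⟶ DX.B, c ≫ s = DX.b := by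
  have hvδ : v ≫ δ = 0 := comp_distTriang_mor_zero₂₃ _ hT
  have hh₀ : DY.desc DZ v ≫ h = 0 := by
    refine Triangle.eq_zero_of_mor₂_comp_eq_zero _ DY.dist
      (shift_hom_eq_zero 1 (DY.hom_A_B_eq_zero DX)) ?_
    change DY.b ≫ DY.desc DZ v ≫ h = 0
    rw [← Category.assoc, b_comp_desc, Category.assoc, hh, ← Category.assoc, hvδ, zero_comp]
  obtain ⟨s₁, hs₁⟩ : ∃ s₁ : K⟦(1 : ℤ)⟧ ⟶ DX.B⟦(1 : ℤ)⟧, h = k₃ ≫ s₁ :=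
    Triangle.yoneda_exact₃ _ hK h hh₀
  obtain ⟨s₀, rfl⟩ := (shiftFunctor C (1 : ℤ)).map_surjective s₁
  obtain ⟨κ, hκ⟩ : ∃ κ : Y ⟶ DX.B, DX.b - c ≫ s₀ = u ≫ κ := by
    refine Triangle.yoneda_exact₁ _ hT (DX.b - c ≫ s₀) ?_
    change δ ≫ (DX.b - c ≫ s₀)⟦(1 : ℤ)⟧' = 0
    rw [Functor.map_sub, Preadditive.comp_sub, Functor.map_comp, ← Category.assoc, hc₂,
      Category.assoc, ← hs₁, hh, sub_self]
  obtain ⟨σ, rfl⟩ : ∃ σ : DY.B ⟶ DX.B, κ = DY.b ≫ σ :=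
    Triangle.yoneda_exact₂ _ DY.dist κ (DY.hom_A_B_eq_zero DX _)
  refine ⟨s₀ + k ≫ σ, ?_⟩
  rw [Preadditive.comp_add, ← Category.assoc, ← hc₁, Category.assoc, ← hκ, add_sub_cancel]

end Fiber

theorem exists_distinguished_desc {u : X ⟶ Y} {v : Y ⟶ Z} {δ : Z ⟶ X⟦(1 : ℤ)⟧}
    (hT : Triangle.mk u v δ ∈ distTriang C) (hX : X ∈ t.le) :
    ∃ h, Triangle.mk (DX.desc DY u) (DY.desc DZ v) h ∈ distTriang C := by
  obtain ⟨h, hh⟩ := exists_b_comp_eq DX DZ (δ ≫ DX.b⟦(1 : ℤ)⟧')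
  obtain ⟨K, k, k₃, hK⟩ := distinguished_cocone_triangle₁ (DY.desc DZ v)
  obtain ⟨c, hc₁, hc₂⟩ : ∃ c : X ⟶ K, u ≫ DY.b = c ≫ k ∧ δ ≫ c⟦(1 : ℤ)⟧' = DZ.b ≫ k₃ :=
    complete_distinguished_triangle_morphism₁ _ _ hT hK DY.b DZ.b (DY.b_comp_desc DZ v).symm
  obtain ⟨e, he⟩ : ∃ e : DX.B ⟶ K, c = DX.b ≫ e :=
    Triangle.yoneda_exact₂ _ DX.dist c (hom_A_fiber_eq_zero hK DX _)
  obtain ⟨s, hs⟩ := exists_comp_eq_b_of_fiber hT hK hc₁ hc₂ hh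
  have hes : e ≫ s = 𝟙 DX.B :=
    DX.cancel_b DX.B_mem_heart.2 (by rw [← Category.assoc, ← he, hs, Category.comp_id])
  have hse : s ≫ e = 𝟙 K := sub_eq_zero.1 (fiber_endo_eq_zero_of_comp_eq_zero hT hX hK hc₁ hc₂
    (by rw [Preadditive.comp_sub, ← Category.assoc, hs, ← he, Category.comp_id, sub_self]))
  have hek : e ≫ k = DX.desc DY u :=
    DX.cancel_b DY.B_mem_heart.2 (by rw [← Category.assoc, ← he, ← hc₁, b_comp_desc])
  have hhe : h ≫ e⟦(1 : ℤ)⟧' = k₃ := by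
    refine sub_eq_zero.1 (Triangle.eq_zero_of_mor₂_comp_eq_zero _ DZ.dist
      (shift_hom_eq_zero 1 (hom_A_fiber_eq_zero hK DZ)) ?_)
    change DZ.b ≫ (h ≫ e⟦(1 : ℤ)⟧' - k₃) = 0
    rw [Preadditive.comp_sub, ← Category.assoc, hh, Category.assoc, ← Functor.map_comp, ← he,
      hc₂, sub_self]
  refine ⟨h, isomorphic_distinguished _ hK _
    (Triangle.isoMk _ _ ⟨e, s, hes, hse⟩ (Iso.refl _) (Iso.refl _) ?_ ?_ ?_)⟩
  · change DX.desc DY u ≫ 𝟙 DY.B = e ≫ k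
    rw [Category.comp_id, hek]
  · exact (Category.comp_id _).trans (Category.id_comp _).symm
  · change h ≫ e⟦(1 : ℤ)⟧' = 𝟙 DZ.B ≫ k₃
    rw [hhe, Category.id_comp]

end NiceDecompositionData

section Truncation

variable (D : ∀ X : Heart t, NiceDecompositionData w t i X.obj)

noncomputable def weightTruncLE : Heart t ⥤ Heart t where
  obj X := ⟨(D X).A, (D X).A_mem_heart⟩
  map {X Y} f := ObjectProperty.homMk ((D X).lift (D Y) f.hom)
  map_id X := ObjectProperty.hom_ext _ (D X).lift_id
  map_comp {X Y Z} f g := ObjectProperty.hom_ext _ ((D X).lift_comp (D Y) (D Z) f.hom g.hom)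

noncomputable def weightTruncGE : Heart t ⥤ Heart t where
  obj X := ⟨(D X).B, (D X).B_mem_heart⟩
  map {X Y} f := ObjectProperty.homMk ((D X).desc (D Y) f.hom)
  map_id X := ObjectProperty.hom_ext _ (D X).desc_id
  map_comp {X Y Z} f g := ObjectProperty.hom_ext _ ((D X).desc_comp (D Y) (D Z) f.hom g.hom)

noncomputable def weightTruncLEι : weightTruncLE D ⟶ 𝟭 (Heart t) where
  app X := ObjectProperty.homMk (D X).a
  naturality X Y f := ObjectProperty.hom_ext _ ((D X).lift_comp_a (D Y) f.hom)

noncomputable def weightTruncGEπ : 𝟭 (Heart t) ⟶ weightTruncGE D where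
  app X := ObjectProperty.homMk (D X).b
  naturality X Y f := ObjectProperty.hom_ext _ ((D X).b_comp_desc (D Y) f.hom).symm

lemma weightTruncLE_heartExact : HeartExact t (weightTruncLE D) := by
  rintro X Y Z f g ⟨-, -, hZ, δ, hT⟩
  obtain ⟨h, hh⟩ := (D X).exists_distinguished_lift (D Y) (D Z) hT hZ.2
  exact ⟨(D X).A_mem_heart, (D Y).A_mem_heart, (D Z).A_mem_heart, h, hh⟩

lemma weightTruncGE_heartExact : HeartExact t (weightTruncGE D) := by
  rintro X Y Z f g ⟨hX, -, -, δ, hT⟩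
  obtain ⟨h, hh⟩ := (D X).exists_distinguished_desc (D Y) (D Z) hT hX.1
  exact ⟨(D X).B_mem_heart, (D Y).B_mem_heart, (D Z).B_mem_heart, h, hh⟩

lemma heartSES_weightTruncLEι_weightTruncGEπ (X : Heart t) :
    HeartSES t (homC ((weightTruncLEι D).app X)) (homC ((weightTruncGEπ D).app X)) :=
  ⟨(D X).A_mem_heart, X.property, (D X).B_mem_heart, (D X).d, (D X).dist⟩

end Truncation

end WT


namespace WT

variable (C : Type u) [Category.{v} C] [Preadditive C] [HasZeroObject C]
  [HasShift C ℤ] [∀ n : ℤ, (shiftFunctor C n).Additive] [Pretriangulated C]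
variable [HasBinaryBiproducts C]

/-- Theorem 1.1, implication (iv) ⟹ (iv'): if nice weight decompositions exist, then
for every `i` there are exact functors `L_i, R_i` on the heart of `t` together with
natural transformations `L_i ⟶ Id ⟶ R_i` such that `L_i X ∈ C^{w≤i}`,
`R_i X ∈ C^{w≥i+1}`, and `0 → L_i X → X → R_i X → 0` is a short exact sequence in the
heart. -/
theorem functorial_nice_decompositions (w : BoundedWeightStructure C)
    (t : BoundedTStructure C) (h4 : ConditionIV w t) (i : ℤ) :
    ∃ (L R : Heart t ⥤ Heart t) (α : L ⟶ 𝟭 (Heart t)) (β : 𝟭 (Heart t) ⟶ R),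
      (∀ X : Heart t, (L.obj X).obj ∈ w.wle i) ∧
      (∀ X : Heart t, (R.obj X).obj ∈ w.wge (i + 1)) ∧
      HeartExact t L ∧ HeartExact t R ∧
      (∀ X : Heart t, HeartSES t (homC (α.app X)) (homC (β.app X))) := by
  let D : ∀ X : Heart t, NiceDecompositionData w t i X.obj :=
    fun X => (h4 X.obj X.property i).nonempty_data.some
  exact ⟨weightTruncLE D, weightTruncGE D, weightTruncLEι D, weightTruncGEπ D,
    fun X => (D X).A_mem_wle, fun X => (D X).B_mem_wge, weightTruncLE_heartExact D,
    weightTruncGE_heartExact D, heartSES_weightTruncLEι_weightTruncGEπ D⟩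

end WT
end

section
/- Let C be a triangulated category carrying a bounded weight structure w and a bounded t-structure t satisfying condition (iv) of Theorem 1.1 (for every X ∈ Heart(t) and every i ∈ ℤ there exists a nice weight decomposition of X at level i). Then for every i ∈ ℤ: the inclusion of the full subcategory of Heart(t) on the objects lying in C^{w≤i} into Heart(t) admits a right adjoint W_{≤i}, whose composition with the inclusion is an exact endofunctor of Heart(t); dually, the inclusion of the full subcategory of Heart(t) on the objects lying in C^{w≥i+1} into Heart(t) admits a left adjoint W_{≥i+1}, given on objects by X ↦ X / W_{≤i}X, whose composition with the inclusion is an exact endofunctor of Heart(t). -/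
open CategoryTheory CategoryTheory.Limits CategoryTheory.Pretriangulated

universe v u

/-! A nice weight decomposition `A → X → B → A⟦1⟧` of an object `X` of the heart is at the same
time a weight decomposition and a short exact sequence of the heart. Weight orthogonality makes
every morphism from `Heart(t) ∩ C^{w≤i}` to `X` factor through `A`, and t-orthogonality
(`Hom(T, B⟦-1⟧) = 0` for `T` in the heart) makes the factorization unique; so `X ↦ A` is right
adjoint to the inclusion, and dually `X ↦ B` is left adjoint.

For exactness of `W_{≤i}`, take a short exact sequence `X → Y → Z` of the heart, complete
`A_X → A_Y` to a distinguished triangle `A_X → A_Y → Q`, and map it to `X → Y → Z`. Diagram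
chases in which every obstruction is a morphism killed by one of the two orthogonalities show
that `Q → Z` factors through `A_Z` by an isomorphism; the key point is that `Q` lies in `t≥0`,
because `A_X → A_Y` is a monomorphism seen from `t≤0`. The dual argument, with the fibre of
`B_Y → B_Z`, gives exactness of `W_{≥i+1}`. -/

namespace WT

section Coreflection

variable {D : Type*} [Category D] {P Q : ObjectProperty D} (hPQ : P ≤ Q)
  (R : Q.FullSubcategory → P.FullSubcategory) (ε : ∀ X, (R X).obj ⟶ X.obj)

lemma homMk_comp_bijective
    (hε : ∀ (T : P.FullSubcategory) X, Function.Bijective fun ψ : T.obj ⟶ (R X).obj => ψ ≫ ε X)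
    (T : P.FullSubcategory) (X : Q.FullSubcategory) :
    Function.Bijective fun ψ : T ⟶ R X =>
      (ObjectProperty.homMk (ψ.hom ≫ ε X) : (ObjectProperty.ιOfLE hPQ).obj T ⟶ X) := by
  refine ⟨fun ψ ψ' h => ObjectProperty.hom_ext _ ((hε T X).1 ?_), fun φ => ?_⟩
  · exact congrArg (·.hom) h
  · obtain ⟨ψ, hψ⟩ := (hε T X).2 φ.hom
    exact ⟨ObjectProperty.homMk ψ, ObjectProperty.hom_ext _ hψ⟩

variable (hε : ∀ (T : P.FullSubcategory) X, Function.Bijective fun ψ : T.obj ⟶ (R X).obj => ψ ≫ ε X)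

noncomputable def coreflectionHomEquiv (T : P.FullSubcategory) (X : Q.FullSubcategory) :
    ((ObjectProperty.ιOfLE hPQ).obj T ⟶ X) ≃ (T ⟶ R X) :=
  (Equiv.ofBijective _ (homMk_comp_bijective hPQ R ε hε T X)).symm

lemma coreflectionHomEquiv_hom_comp {T : P.FullSubcategory} {X : Q.FullSubcategory}
    (φ : (ObjectProperty.ιOfLE hPQ).obj T ⟶ X) :
    (coreflectionHomEquiv hPQ R ε hε T X φ).hom ≫ ε X = φ.hom :=
  congrArg (·.hom) ((Equiv.ofBijective _ (homMk_comp_bijective hPQ R ε hε T X)).apply_symm_apply φ)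

noncomputable def coreflector : Q.FullSubcategory ⥤ P.FullSubcategory :=
  Adjunction.rightAdjointOfEquiv (coreflectionHomEquiv hPQ R ε hε) fun T' T X f g =>
    ObjectProperty.hom_ext _ <| (hε T' X).1 <| by
      dsimp only
      rw [coreflectionHomEquiv_hom_comp, ObjectProperty.FullSubcategory.comp_hom,
        ObjectProperty.FullSubcategory.comp_hom, Category.assoc, coreflectionHomEquiv_hom_comp]
      rfl

noncomputable def coreflectionAdjunction :
    ObjectProperty.ιOfLE hPQ ⊣ coreflector hPQ R ε hε :=
  Adjunction.adjunctionOfEquivRight _ _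

lemma coreflectionAdjunction_counit_app_hom (X : Q.FullSubcategory) :
    ((coreflectionAdjunction hPQ R ε hε).counit.app X).hom = ε X :=
  Category.id_comp (ε X)

lemma coreflector_map_hom_comp {X Y : Q.FullSubcategory} (u : X ⟶ Y) :
    ((coreflector hPQ R ε hε).map u).hom ≫ ε Y = ε X ≫ u.hom := by
  have h := congrArg (·.hom) ((coreflectionAdjunction hPQ R ε hε).counit.naturality u)
  dsimp only [Functor.comp_map, Functor.id_map] at h
  rwa [ObjectProperty.FullSubcategory.comp_hom, ObjectProperty.FullSubcategory.comp_hom,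
    coreflectionAdjunction_counit_app_hom, coreflectionAdjunction_counit_app_hom] at h

end Coreflection

section Reflection

variable {D : Type*} [Category D] {P Q : ObjectProperty D} (hPQ : P ≤ Q)
  (L : Q.FullSubcategory → P.FullSubcategory) (η : ∀ X, X.obj ⟶ (L X).obj)

lemma comp_homMk_bijective
    (hη : ∀ X (T : P.FullSubcategory), Function.Bijective fun ψ : (L X).obj ⟶ T.obj => η X ≫ ψ)
    (X : Q.FullSubcategory) (T : P.FullSubcategory) :
    Function.Bijective fun ψ : L X ⟶ T =>
      (ObjectProperty.homMk (η X ≫ ψ.hom) : X ⟶ (ObjectProperty.ιOfLE hPQ).obj T) := by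
  refine ⟨fun ψ ψ' h => ObjectProperty.hom_ext _ ((hη X T).1 ?_), fun φ => ?_⟩
  · exact congrArg (·.hom) h
  · obtain ⟨ψ, hψ⟩ := (hη X T).2 φ.hom
    exact ⟨ObjectProperty.homMk ψ, ObjectProperty.hom_ext _ hψ⟩

variable (hη : ∀ X (T : P.FullSubcategory), Function.Bijective fun ψ : (L X).obj ⟶ T.obj => η X ≫ ψ)

noncomputable def reflectionHomEquiv (X : Q.FullSubcategory) (T : P.FullSubcategory) :
    (L X ⟶ T) ≃ (X ⟶ (ObjectProperty.ιOfLE hPQ).obj T) :=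
  Equiv.ofBijective _ (comp_homMk_bijective hPQ L η hη X T)

noncomputable def reflector : Q.FullSubcategory ⥤ P.FullSubcategory :=
  Adjunction.leftAdjointOfEquiv (reflectionHomEquiv hPQ L η hη) fun _ _ _ _ _ =>
    ObjectProperty.hom_ext _ (Category.assoc _ _ _).symm

noncomputable def reflectionAdjunction : reflector hPQ L η hη ⊣ ObjectProperty.ιOfLE hPQ :=
  Adjunction.adjunctionOfEquivLeft _ _

lemma reflectionAdjunction_unit_app_hom (X : Q.FullSubcategory) :
    ((reflectionAdjunction hPQ L η hη).unit.app X).hom = η X :=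
  Category.comp_id (η X)

lemma comp_reflector_map_hom {X Y : Q.FullSubcategory} (u : X ⟶ Y) :
    η X ≫ ((reflector hPQ L η hη).map u).hom = u.hom ≫ η Y := by
  have h := congrArg (·.hom) ((reflectionAdjunction hPQ L η hη).unit.naturality u).symm
  dsimp only [Functor.comp_map, Functor.id_map] at h
  rwa [ObjectProperty.FullSubcategory.comp_hom, ObjectProperty.FullSubcategory.comp_hom,
    reflectionAdjunction_unit_app_hom, reflectionAdjunction_unit_app_hom] at h

end Reflection

variable {C : Type u} [Category.{v} C]

lemma eq_zero_of_iso [HasZeroMorphisms C] {X X' Y Y' : C} (eX : X ≅ X') (eY : Y ≅ Y')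
    (h : ∀ f : X' ⟶ Y', f = 0) (f : X ⟶ Y) : f = 0 := by
  calc f = eX.hom ≫ (eX.inv ≫ f ≫ eY.hom) ≫ eY.inv := by simp
    _ = 0 := by rw [h (eX.inv ≫ f ≫ eY.hom)]; simp

variable [HasShift C ℤ]

section ShiftClass

variable {D : Set C} {X Y : C} {p q : ℤ}

lemma mem_shiftClass_of_iso (e : X ≅ Y) (h : Y ∈ shiftClass C D p) : X ∈ shiftClass C D p := by
  obtain ⟨Z, hZ, ⟨e'⟩⟩ := h
  exact ⟨Z, hZ, ⟨e ≪≫ e'⟩⟩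

lemma mem_shiftClass_zero (h : X ∈ D) : X ∈ shiftClass C D 0 :=
  ⟨X, h, ⟨((shiftFunctorZero C ℤ).app X).symm⟩⟩

lemma shift_mem_shiftClass (h : X ∈ shiftClass C D p) (n : ℤ) (hq : p + n = q) :
    X⟦n⟧ ∈ shiftClass C D q := by
  obtain ⟨Z, hZ, ⟨e⟩⟩ := h
  exact ⟨Z, hZ, ⟨(shiftFunctor C n).mapIso e ≪≫ ((shiftFunctorAdd' C p n q hq).app Z).symm⟩⟩

end ShiftClass

variable [Preadditive C]

lemma hom_shift_mul_eq_zero {D E : Set C} {a : ℤ} (hE : ∀ Y ∈ E, Y⟦a⟧ ∈ E)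
    (horth : ∀ X ∈ D, ∀ Y ∈ E, ∀ f : X ⟶ Y⟦a⟧, f = 0) (k : ℕ) :
    ∀ X ∈ D, ∀ Y ∈ E, ∀ f : X ⟶ Y⟦((k + 1 : ℕ) : ℤ) * a⟧, f = 0 := by
  induction k with
  | zero => rw [Nat.cast_one, one_mul]; exact horth
  | succ k ih =>
    intro X hX Y hY
    refine eq_zero_of_iso (Iso.refl X)
      ((shiftFunctorAdd' C a (((k + 1 : ℕ) : ℤ) * a) _ (by push_cast; ring)).app Y) ?_
    exact ih X hX _ (hE Y hY)

variable [∀ n : ℤ, (shiftFunctor C n).Additive]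

lemma hom_shiftClass_eq_zero {D E : Set C} {a : ℤ} (hE : ∀ Y ∈ E, Y⟦a⟧ ∈ E)
    (horth : ∀ X ∈ D, ∀ Y ∈ E, ∀ f : X ⟶ Y⟦a⟧, f = 0) {p q : ℤ} (k : ℕ)
    (hpq : q = ((k + 1 : ℕ) : ℤ) * a + p) {X Y : C} (hX : X ∈ shiftClass C D p)
    (hY : Y ∈ shiftClass C E q) (f : X ⟶ Y) : f = 0 := by
  obtain ⟨X', hX', ⟨eX⟩⟩ := hX
  obtain ⟨Y', hY', ⟨eY⟩⟩ := hY
  refine eq_zero_of_iso eX (eY ≪≫ (shiftFunctorAdd' C _ p q hpq.symm).app Y') (fun g => ?_) f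
  rw [← (shiftFunctor C p).map_preimage g,
    hom_shift_mul_eq_zero hE horth k X' hX' Y' hY' ((shiftFunctor C p).preimage g),
    Functor.map_zero]

variable [HasZeroObject C] [Pretriangulated C]

section DistinguishedTriangle

variable {X₁ X₂ X₃ W : C} {f : X₁ ⟶ X₂} {g : X₂ ⟶ X₃} {h : X₃ ⟶ X₁⟦(1 : ℤ)⟧}

lemma exists_comp_mor₁_eq (hT : Triangle.mk f g h ∈ distTriang C) (x : W ⟶ X₂)
    (hx : x ≫ g = 0) : ∃ y : W ⟶ X₁, y ≫ f = x :=
  (Triangle.coyoneda_exact₂ _ hT x hx).imp fun _ hy => hy.symm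

lemma exists_comp_mor₂_eq (hT : Triangle.mk f g h ∈ distTriang C) (x : W ⟶ X₃)
    (hx : x ≫ h = 0) : ∃ y : W ⟶ X₂, y ≫ g = x :=
  (Triangle.coyoneda_exact₃ _ hT x hx).imp fun _ hy => hy.symm

lemma exists_comp_mor₃_eq (hT : Triangle.mk f g h ∈ distTriang C) (x : W ⟶ X₁⟦(1 : ℤ)⟧)
    (hx : x ≫ f⟦(1 : ℤ)⟧' = 0) : ∃ y : W ⟶ X₃, y ≫ h = x :=
  (Triangle.coyoneda_exact₁ _ hT x hx).imp fun _ hy => hy.symm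

lemma exists_mor₂_comp_eq (hT : Triangle.mk f g h ∈ distTriang C) (x : X₂ ⟶ W)
    (hx : f ≫ x = 0) : ∃ y : X₃ ⟶ W, g ≫ y = x :=
  (Triangle.yoneda_exact₂ _ hT x hx).imp fun _ hy => hy.symm

lemma exists_mor₃_comp_eq (hT : Triangle.mk f g h ∈ distTriang C) (x : X₃ ⟶ W)
    (hx : g ≫ x = 0) : ∃ y : X₁⟦(1 : ℤ)⟧ ⟶ W, h ≫ y = x :=
  (Triangle.yoneda_exact₃ _ hT x hx).imp fun _ hy => hy.symm

lemma exists_mor₁_comp_eq (hT : Triangle.mk f g h ∈ distTriang C) (x : X₁ ⟶ W)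
    (hx : h ≫ x⟦(1 : ℤ)⟧' = 0) : ∃ y : X₂ ⟶ W, f ≫ y = x := by
  have hT' : Triangle.mk g h (-f⟦(1 : ℤ)⟧') ∈ distTriang C := rot_of_distTriang _ hT
  obtain ⟨y, hy⟩ := exists_mor₃_comp_eq hT' _ hx
  refine ⟨-(shiftFunctor C (1 : ℤ)).preimage y, (shiftFunctor C (1 : ℤ)).map_injective ?_⟩
  rw [← hy, Functor.map_comp, Functor.map_neg, Functor.map_preimage, Preadditive.neg_comp,
    Preadditive.comp_neg]

lemma exists_comp_shift_mor₁_eq (hT : Triangle.mk f g h ∈ distTriang C)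
    (x : W ⟶ X₂⟦(1 : ℤ)⟧) (hx : x ≫ g⟦(1 : ℤ)⟧' = 0) :
    ∃ y : W ⟶ X₁⟦(1 : ℤ)⟧, y ≫ f⟦(1 : ℤ)⟧' = x := by
  have hT' : Triangle.mk h (-f⟦(1 : ℤ)⟧') (-g⟦(1 : ℤ)⟧') ∈ distTriang C :=
    rot_of_distTriang _ (rot_of_distTriang _ hT)
  obtain ⟨y, hy⟩ := exists_comp_mor₂_eq hT' x (by rw [Preadditive.comp_neg, hx, neg_zero])
  exact ⟨-y, by rwa [Preadditive.neg_comp, ← Preadditive.comp_neg]⟩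

lemma distTriang_of_iso₁ (hT : Triangle.mk f g h ∈ distTriang C) {X₁' : C} (e : X₁' ≅ X₁)
    {f' : X₁' ⟶ X₂} (hf : e.hom ≫ f = f') : Triangle.mk f' g (h ≫ e.inv⟦(1 : ℤ)⟧') ∈ distTriang C :=
  isomorphic_distinguished _ hT _ <| Triangle.isoMk _ _ e (Iso.refl X₂) (Iso.refl X₃)
    (by show f' ≫ 𝟙 X₂ = e.hom ≫ f; simp [hf]) (by show g ≫ 𝟙 X₃ = 𝟙 X₂ ≫ g; simp)
    (by show (h ≫ e.inv⟦(1 : ℤ)⟧') ≫ e.hom⟦(1 : ℤ)⟧' = 𝟙 X₃ ≫ h; simp [← Functor.map_comp])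

lemma distTriang_of_iso₃ (hT : Triangle.mk f g h ∈ distTriang C) {X₃' : C} (e : X₃' ≅ X₃)
    {g' : X₂ ⟶ X₃'} (hg : g' ≫ e.hom = g) : Triangle.mk f g' (e.hom ≫ h) ∈ distTriang C :=
  isomorphic_distinguished _ hT _ <| Triangle.isoMk _ _ (Iso.refl X₁) (Iso.refl X₂) e
    (by show f ≫ 𝟙 X₂ = 𝟙 X₁ ≫ f; simp) (by show g' ≫ e.hom = 𝟙 X₂ ≫ g; simp [hg])
    (by show (e.hom ≫ h) ≫ (𝟙 X₁)⟦(1 : ℤ)⟧' = e.hom ≫ h; simp)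

end DistinguishedTriangle

namespace BoundedTStructure

variable (t : BoundedTStructure C) {X Y : C}

lemma hom_eq_zero {a b : ℤ} (hab : a < b) (hX : X ∈ t.tle a) (hY : Y ∈ t.tge b) (f : X ⟶ Y) :
    f = 0 :=
  hom_shiftClass_eq_zero t.ge_shift t.orth (b - a - 1).toNat (by omega) hX hY f

-- `t.le` and `t.ge` need not be closed under isomorphism, while `t.tle 0` and `t.tge 0` are;
-- objects built by cones and fibres are therefore only ever placed in the latter.
lemma mem_tle_zero (h : X ∈ t.le) : X ∈ t.tle 0 := mem_shiftClass_zero h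

lemma mem_tge_zero (h : X ∈ t.ge) : X ∈ t.tge 0 := mem_shiftClass_zero h

lemma shift_mem_tle {a b : ℤ} (h : X ∈ t.tle a) (n : ℤ) (hab : a = b + n := by omega) :
    X⟦n⟧ ∈ t.tle b :=
  shift_mem_shiftClass h n (by omega)

lemma shift_mem_tge {a b : ℤ} (h : X ∈ t.tge a) (n : ℤ) (hab : a = b + n := by omega) :
    X⟦n⟧ ∈ t.tge b :=
  shift_mem_shiftClass h n (by omega)

lemma hom_shift_one_eq_zero (hX : X ∈ t.tle 0) (hY : Y ∈ t.tge 0) (f : X⟦(1 : ℤ)⟧ ⟶ Y) :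
    f = 0 :=
  t.hom_eq_zero (show (-1 : ℤ) < 0 by omega) (t.shift_mem_tle hX 1) hY f

lemma mem_tle_zero_of_hom_eq_zero (h : ∀ B ∈ t.tge 1, ∀ g : X ⟶ B, g = 0) : X ∈ t.tle 0 := by
  obtain ⟨A, B, f, g, k, hT, hA, hB⟩ := t.decomp X
  have hB0 : IsZero B := by
    obtain ⟨e, he⟩ := exists_mor₃_comp_eq hT (𝟙 B) (by rw [h B hB g, zero_comp])
    rw [IsZero.iff_id_eq_zero, ← he,
      t.hom_eq_zero (show (-1 : ℤ) < 1 by omega) (t.shift_mem_tle (t.mem_tle_zero hA) 1) hB e,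
      comp_zero]
  have : IsIso f := (Triangle.isZero₃_iff_isIso₁ _ hT).1 hB0
  exact mem_shiftClass_of_iso (asIso f).symm (t.mem_tle_zero hA)

lemma mem_tge_zero_of_hom_eq_zero (h : ∀ A ∈ t.le, ∀ f : A⟦(1 : ℤ)⟧ ⟶ X, f = 0) :
    X ∈ t.tge 0 := by
  obtain ⟨A, B, f, g, k, hT, hA, hB⟩ := t.decomp (X⟦(-1 : ℤ)⟧)
  have hf : f⟦(1 : ℤ)⟧' = 0 := by
    simpa using h A hA (f⟦(1 : ℤ)⟧' ≫ (shiftFunctorCompIsoId C (-1) 1 (by omega)).hom.app X)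
  have hA0 : IsZero (A⟦(1 : ℤ)⟧) := by
    obtain ⟨e, he⟩ := exists_comp_mor₃_eq hT (𝟙 _) (by rw [hf, comp_zero])
    rw [IsZero.iff_id_eq_zero, ← he,
      t.hom_eq_zero (show (-1 : ℤ) < 1 by omega) (t.shift_mem_tle (t.mem_tle_zero hA) 1) hB e,
      zero_comp]
  have : IsIso g := (Triangle.isZero₃_iff_isIso₁ _ (rot_of_distTriang _ hT)).1 hA0
  have hX : X⟦(-1 : ℤ)⟧ ∈ t.tge 1 := mem_shiftClass_of_iso (asIso g) hB
  exact mem_shiftClass_of_iso ((shiftFunctorCompIsoId C (-1) 1 (by omega)).app X).symm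
    (t.shift_mem_tge hX 1)

section Cancellation

variable {X₁ X₂ X₃ W : C} {f : X₁ ⟶ X₂} {g : X₂ ⟶ X₃}
  {h : X₃ ⟶ X₁⟦(1 : ℤ)⟧}

lemma eq_zero_of_comp_mor₁_eq_zero (hT : Triangle.mk f g h ∈ distTriang C)
    (h₃ : X₃ ∈ t.tge 0) (hW : W ∈ t.tle 0) {s : W ⟶ X₁} (hs : s ≫ f = 0) : s = 0 := by
  rw [← (shiftFunctor C (1 : ℤ)).map_eq_zero_iff]
  obtain ⟨e, he⟩ := exists_comp_mor₃_eq hT (s⟦(1 : ℤ)⟧')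
    (by rw [← Functor.map_comp, hs, Functor.map_zero])
  rw [← he, t.hom_eq_zero (show (-1 : ℤ) < 0 by omega) (t.shift_mem_tle hW 1) h₃ e, zero_comp]

lemma cancel_mor₁ (hT : Triangle.mk f g h ∈ distTriang C) (h₃ : X₃ ∈ t.tge 0)
    (hW : W ∈ t.tle 0) {s s' : W ⟶ X₁} (hs : s ≫ f = s' ≫ f) : s = s' :=
  sub_eq_zero.mp <| t.eq_zero_of_comp_mor₁_eq_zero hT h₃ hW <| by
    rw [Preadditive.sub_comp, hs, sub_self]

lemma eq_zero_of_mor₂_comp_eq_zero (hT : Triangle.mk f g h ∈ distTriang C)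
    (h₁ : X₁ ∈ t.tle 0) (hW : W ∈ t.tge 0) {s : X₃ ⟶ W} (hs : g ≫ s = 0) : s = 0 := by
  obtain ⟨e, rfl⟩ := exists_mor₃_comp_eq hT s hs
  rw [t.hom_shift_one_eq_zero h₁ hW e, comp_zero]

lemma cancel_mor₂ (hT : Triangle.mk f g h ∈ distTriang C) (h₁ : X₁ ∈ t.tle 0)
    (hW : W ∈ t.tge 0) {s s' : X₃ ⟶ W} (hs : g ≫ s = g ≫ s') : s = s' :=
  sub_eq_zero.mp <| t.eq_zero_of_mor₂_comp_eq_zero hT h₁ hW <| by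
    rw [Preadditive.comp_sub, hs, sub_self]

lemma mem_tge_zero_of_mono (hT : Triangle.mk f g h ∈ distTriang C) (h₂ : X₂ ∈ t.tge 0)
    (hf : ∀ W ∈ t.le, ∀ s : W ⟶ X₁, s ≫ f = 0 → s = 0) : X₃ ∈ t.tge 0 := by
  refine t.mem_tge_zero_of_hom_eq_zero fun A hA s => ?_
  have hhf : h ≫ f⟦(1 : ℤ)⟧' = 0 := comp_distTriang_mor_zero₃₁ _ hT
  have hsh : s ≫ h = 0 := by
    have : (shiftFunctor C (1 : ℤ)).preimage (s ≫ h) = 0 := hf A hA _ <| by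
      apply (shiftFunctor C (1 : ℤ)).map_injective
      rw [Functor.map_comp, Functor.map_preimage, Category.assoc, hhf, comp_zero, Functor.map_zero]
    rw [← (shiftFunctor C (1 : ℤ)).map_preimage (s ≫ h), this, Functor.map_zero]
  obtain ⟨e, rfl⟩ := exists_comp_mor₂_eq hT s hsh
  rw [t.hom_eq_zero (show (-1 : ℤ) < 0 by omega) (t.shift_mem_tle (t.mem_tle_zero hA) 1) h₂ e,
    zero_comp]

lemma mem_tle_zero_of_epi (hT : Triangle.mk f g h ∈ distTriang C) (h₂ : X₂ ∈ t.tle 0)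
    (hg : ∀ W ∈ t.tge 0, ∀ s : X₃ ⟶ W, g ≫ s = 0 → s = 0) : X₁ ∈ t.tle 0 := by
  refine t.mem_tle_zero_of_hom_eq_zero fun B hB s => ?_
  have hgh : g ≫ h = 0 := comp_distTriang_mor_zero₂₃ _ hT
  obtain ⟨e, rfl⟩ := exists_mor₁_comp_eq hT s <| hg _ (t.shift_mem_tge hB 1) _ <| by
    rw [← Category.assoc, hgh, zero_comp]
  rw [t.hom_eq_zero (show (0 : ℤ) < 1 by omega) h₂ hB e, comp_zero]

end Cancellation

end BoundedTStructure

namespace BoundedWeightStructure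

variable (w : BoundedWeightStructure C) {X Y : C}

lemma hom_eq_zero {a b : ℤ} (hab : a < b) (hX : X ∈ w.wle a) (hY : Y ∈ w.wge b) (f : X ⟶ Y) :
    f = 0 :=
  hom_shiftClass_eq_zero w.ge_shift w.orth (b - a - 1).toNat (by omega) hX hY f

lemma shift_mem_wle {a b : ℤ} (h : X ∈ w.wle a) (n : ℤ) (hab : a + n = b := by omega) :
    X⟦n⟧ ∈ w.wle b :=
  shift_mem_shiftClass h n hab

lemma shift_mem_wge_s5 {a b : ℤ} (h : X ∈ w.wge a) (n : ℤ) (hab : a + n = b := by omega) :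
    X⟦n⟧ ∈ w.wge b :=
  shift_mem_shiftClass h n hab

end BoundedWeightStructure

variable [HasBinaryBiproducts C]

structure NiceWeightDecomposition (w : BoundedWeightStructure C) (t : BoundedTStructure C)
    (i : ℤ) (X : C) where
  A : C
  B : C
  f : A ⟶ X
  g : X ⟶ B
  h : B ⟶ A⟦(1 : ℤ)⟧
  distinguished : Triangle.mk f g h ∈ distTriang C
  A_mem_wle : A ∈ w.wle i
  B_mem_wge : B ∈ w.wge (i + 1)
  A_mem_heart : A ∈ t.heart
  B_mem_heart : B ∈ t.heart

variable {w : BoundedWeightStructure C} {t : BoundedTStructure C} {i : ℤ}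

lemma NiceDecomposition.nonempty {X : C} (h : NiceDecomposition w t i X) :
    Nonempty (NiceWeightDecomposition w t i X) := by
  obtain ⟨A, B, f, g, h, hT, hAw, hBw, hA, -, hB⟩ := h
  exact ⟨⟨A, B, f, g, h, hT, hAw, hBw, hA, hB⟩⟩

noncomputable def ConditionIV.decomposition (h4 : ConditionIV w t) (i : ℤ) (X : Heart t) :
    NiceWeightDecomposition w t i X.obj :=
  (h4 X.obj X.property i).nonempty.some

namespace NiceWeightDecomposition

variable {X : C} (D : NiceWeightDecomposition w t i X)

lemma A_mem_tle : D.A ∈ t.tle 0 := t.mem_tle_zero D.A_mem_heart.1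

lemma A_mem_tge : D.A ∈ t.tge 0 := t.mem_tge_zero D.A_mem_heart.2

lemma B_mem_tle : D.B ∈ t.tle 0 := t.mem_tle_zero D.B_mem_heart.1

lemma B_mem_tge : D.B ∈ t.tge 0 := t.mem_tge_zero D.B_mem_heart.2

lemma comp_f_bijective {T : C} (hT : T ∈ t.le) (hTw : T ∈ w.wle i) :
    Function.Bijective fun ψ : T ⟶ D.A => ψ ≫ D.f :=
  ⟨fun _ _ h => t.cancel_mor₁ D.distinguished D.B_mem_tge (t.mem_tle_zero hT) h,
    fun φ => exists_comp_mor₁_eq D.distinguished φ (w.hom_eq_zero (lt_add_one i) hTw D.B_mem_wge _)⟩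

lemma g_comp_bijective {T : C} (hT : T ∈ t.ge) (hTw : T ∈ w.wge (i + 1)) :
    Function.Bijective fun ψ : D.B ⟶ T => D.g ≫ ψ :=
  ⟨fun _ _ h => t.cancel_mor₂ D.distinguished D.A_mem_tle (t.mem_tge_zero hT) h,
    fun φ => exists_mor₂_comp_eq D.distinguished φ (w.hom_eq_zero (lt_add_one i) D.A_mem_wle hTw _)⟩

end NiceWeightDecomposition

variable {X Y Z : C} {u : X ⟶ Y} {v : Y ⟶ Z} {δ : Z ⟶ X⟦(1 : ℤ)⟧}
  {DX : NiceWeightDecomposition w t i X} {DY : NiceWeightDecomposition w t i Y}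
  {DZ : NiceWeightDecomposition w t i Z}

section WeightLow

variable {a : DX.A ⟶ DY.A} {Q : C} {p : DY.A ⟶ Q} {q : Q ⟶ DX.A⟦(1 : ℤ)⟧} {r : Q ⟶ Z}

lemma exists_lift_of_cone (hTQ : Triangle.mk a p q ∈ distTriang C) (hr : p ≫ r = DY.f ≫ v) :
    ∃ φ : Q ⟶ DZ.A, φ ≫ DZ.f = r := by
  refine exists_comp_mor₁_eq DZ.distinguished r ?_
  obtain ⟨e, he⟩ := exists_mor₃_comp_eq hTQ (r ≫ DZ.g) <| by
    rw [reassoc_of% hr]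
    exact w.hom_eq_zero (lt_add_one i) DY.A_mem_wle DZ.B_mem_wge _
  rw [← he, t.hom_shift_one_eq_zero DX.A_mem_tle DZ.B_mem_tge e, comp_zero]

lemma eq_zero_of_comp_cone_eq_zero (hT : Triangle.mk u v δ ∈ distTriang C)
    (hTQ : Triangle.mk a p q ∈ distTriang C) (ha : a ≫ DY.f = DX.f ≫ u)
    (hr₁ : p ≫ r = DY.f ≫ v) (hr₂ : q ≫ DX.f⟦(1 : ℤ)⟧' = r ≫ δ) {T : C} (hT₀ : T ∈ t.le)
    (hTw : T ∈ w.wle i) {x : T ⟶ Q} (hx : x ≫ r = 0) : x = 0 := by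
  have hxq : x ≫ q = 0 := by
    obtain ⟨η, hη⟩ := exists_comp_mor₃_eq DX.distinguished (x ≫ q)
      (by rw [Category.assoc, hr₂, reassoc_of% hx, zero_comp])
    rw [← hη, w.hom_eq_zero (lt_add_one i) hTw DX.B_mem_wge η, zero_comp]
  obtain ⟨y, rfl⟩ := exists_comp_mor₂_eq hTQ x hxq
  obtain ⟨ζ, hζ⟩ := exists_comp_mor₁_eq hT (y ≫ DY.f)
    (by rw [Category.assoc, ← hr₁, ← Category.assoc, hx])
  obtain ⟨ζ', rfl⟩ := exists_comp_mor₁_eq DX.distinguished ζ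
    (w.hom_eq_zero (lt_add_one i) hTw DX.B_mem_wge _)
  have hy : y = ζ' ≫ a := t.cancel_mor₁ DY.distinguished DY.B_mem_tge (t.mem_tle_zero hT₀)
    (by rw [← hζ, Category.assoc, Category.assoc, ha])
  have hap : a ≫ p = 0 := comp_distTriang_mor_zero₁₂ _ hTQ
  rw [hy, Category.assoc, hap, comp_zero]

lemma exists_section_of_cone (hT : Triangle.mk u v δ ∈ distTriang C)
    (hTQ : Triangle.mk a p q ∈ distTriang C) (ha : a ≫ DY.f = DX.f ≫ u)
    (hr₁ : p ≫ r = DY.f ≫ v) (hr₂ : q ≫ DX.f⟦(1 : ℤ)⟧' = r ≫ δ) :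
    ∃ χ : DZ.A ⟶ Q, χ ≫ r = DZ.f := by
  have hδu : δ ≫ u⟦(1 : ℤ)⟧' = 0 := comp_distTriang_mor_zero₃₁ _ hT
  obtain ⟨m, hm⟩ := exists_comp_shift_mor₁_eq DX.distinguished (DZ.f ≫ δ)
    (w.hom_eq_zero (show i < i + 2 by omega) DZ.A_mem_wle (w.shift_mem_wge_s5 DX.B_mem_wge 1) _)
  have hma : m ≫ a⟦(1 : ℤ)⟧' = 0 := by
    obtain ⟨η, hη⟩ := exists_comp_mor₃_eq DY.distinguished (m ≫ a⟦(1 : ℤ)⟧') <| by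
      rw [Category.assoc, ← Functor.map_comp, ha, Functor.map_comp, reassoc_of% hm, hδu,
        comp_zero]
    rw [← hη, w.hom_eq_zero (lt_add_one i) DZ.A_mem_wle DY.B_mem_wge η, zero_comp]
  obtain ⟨x, rfl⟩ := exists_comp_mor₃_eq hTQ m hma
  obtain ⟨η, hη⟩ := exists_comp_mor₂_eq hT (DZ.f - x ≫ r) <| by
    rw [Preadditive.sub_comp, Category.assoc, ← hr₂, ← Category.assoc, hm, sub_self]
  obtain ⟨η', rfl⟩ := exists_comp_mor₁_eq DY.distinguished η
    (w.hom_eq_zero (lt_add_one i) DZ.A_mem_wle DY.B_mem_wge _)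
  refine ⟨x + η' ≫ p, ?_⟩
  rw [Preadditive.add_comp, Category.assoc, hr₁, ← Category.assoc, hη, add_sub_cancel]

lemma cone_mem_tge (hT : Triangle.mk u v δ ∈ distTriang C) (hZ : Z ∈ t.ge)
    (hTQ : Triangle.mk a p q ∈ distTriang C) (ha : a ≫ DY.f = DX.f ≫ u) : Q ∈ t.tge 0 :=
  t.mem_tge_zero_of_mono hTQ DY.A_mem_tge fun _ hW s hs =>
    t.eq_zero_of_comp_mor₁_eq_zero DX.distinguished DX.B_mem_tge (t.mem_tle_zero hW) <|
      t.eq_zero_of_comp_mor₁_eq_zero hT (t.mem_tge_zero hZ) (t.mem_tle_zero hW) <| by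
        rw [Category.assoc, ← ha, reassoc_of% hs, zero_comp]

end WeightLow

theorem exists_distTriang_wle_parts (hT : Triangle.mk u v δ ∈ distTriang C) (hZ : Z ∈ t.ge)
    {a : DX.A ⟶ DY.A} {b : DY.A ⟶ DZ.A} (ha : a ≫ DY.f = DX.f ≫ u)
    (hb : b ≫ DZ.f = DY.f ≫ v) :
    ∃ c : DZ.A ⟶ DX.A⟦(1 : ℤ)⟧, Triangle.mk a b c ∈ distTriang C := by
  obtain ⟨Q, p, q, hTQ⟩ := distinguished_cocone_triangle a
  obtain ⟨r, hr₁, hr₂⟩ : ∃ r : Q ⟶ Z, p ≫ r = DY.f ≫ v ∧ q ≫ DX.f⟦(1 : ℤ)⟧' = r ≫ δ :=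
    complete_distinguished_triangle_morphism _ _ hTQ hT DX.f DY.f ha
  obtain ⟨φ, hφ⟩ := exists_lift_of_cone (DZ := DZ) hTQ hr₁
  obtain ⟨χ, hχ⟩ := exists_section_of_cone hT hTQ ha hr₁ hr₂
  have hpφ : p ≫ φ = b := t.cancel_mor₁ DZ.distinguished DZ.B_mem_tge DY.A_mem_tle
    (by rw [Category.assoc, hφ, hr₁, hb])
  have hχφ : χ ≫ φ = 𝟙 _ := t.cancel_mor₁ DZ.distinguished DZ.B_mem_tge DZ.A_mem_tle
    (by rw [Category.assoc, hφ, hχ, Category.id_comp])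
  have hφχ : φ ≫ χ = 𝟙 Q := by
    refine t.cancel_mor₂ hTQ DX.A_mem_tle (cone_mem_tge hT hZ hTQ ha) (sub_eq_zero.mp ?_)
    refine eq_zero_of_comp_cone_eq_zero hT hTQ ha hr₁ hr₂ DY.A_mem_heart.1 DY.A_mem_wle ?_
    simp only [Preadditive.sub_comp, Category.assoc, Category.comp_id, hχ, hφ, sub_self]
  exact ⟨_, distTriang_of_iso₃ hTQ ⟨χ, φ, hχφ, hφχ⟩ (by simp [← hpφ, hφχ])⟩

section WeightHigh

variable {b : DY.B ⟶ DZ.B} {K : C} {k : K ⟶ DY.B} {l : DZ.B ⟶ K⟦(1 : ℤ)⟧} {r : X ⟶ K}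

lemma exists_desc_of_fiber (hTK : Triangle.mk k b l ∈ distTriang C) (hr : r ≫ k = u ≫ DY.g) :
    ∃ φ : DX.B ⟶ K, DX.g ≫ φ = r := by
  refine exists_mor₂_comp_eq DX.distinguished r ?_
  refine t.eq_zero_of_comp_mor₁_eq_zero hTK DZ.B_mem_tge DX.A_mem_tle ?_
  rw [Category.assoc, hr, ← Category.assoc]
  exact w.hom_eq_zero (lt_add_one i) DX.A_mem_wle DY.B_mem_wge _

lemma eq_zero_of_fiber_comp_eq_zero (hT : Triangle.mk u v δ ∈ distTriang C)
    (hTK : Triangle.mk k b l ∈ distTriang C) (hb : DY.g ≫ b = v ≫ DZ.g)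
    (hr₁ : r ≫ k = u ≫ DY.g) (hr₂ : δ ≫ r⟦(1 : ℤ)⟧' = DZ.g ≫ l) {W : C} (hW : W ∈ t.ge)
    (hWw : W ∈ w.wge (i + 1)) {ε : K ⟶ W} (hε : r ≫ ε = 0) : ε = 0 := by
  have hlε : l ≫ ε⟦(1 : ℤ)⟧' = 0 := by
    obtain ⟨e, he⟩ := exists_mor₃_comp_eq DZ.distinguished (l ≫ ε⟦(1 : ℤ)⟧') <| by
      rw [← Category.assoc, ← hr₂, Category.assoc, ← Functor.map_comp, hε, Functor.map_zero,
        comp_zero]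
    rw [← he, w.hom_eq_zero (show i + 1 < i + 2 by omega) (w.shift_mem_wle DZ.A_mem_wle 1)
      (w.shift_mem_wge_s5 hWw 1) e, comp_zero]
  obtain ⟨ε', rfl⟩ := exists_mor₁_comp_eq hTK ε hlε
  obtain ⟨ξ, hξ⟩ := exists_mor₂_comp_eq hT (DY.g ≫ ε')
    (by rw [← Category.assoc, ← hr₁, Category.assoc, hε])
  obtain ⟨ε'', rfl⟩ := exists_mor₂_comp_eq DZ.distinguished ξ
    (w.hom_eq_zero (lt_add_one i) DZ.A_mem_wle hWw _)
  have hε' : ε' = b ≫ ε'' := t.cancel_mor₂ DY.distinguished DY.A_mem_tle (t.mem_tge_zero hW)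
    (by rw [← hξ, reassoc_of% hb])
  have hkb : k ≫ b = 0 := comp_distTriang_mor_zero₁₂ _ hTK
  rw [hε', reassoc_of% hkb, zero_comp]

lemma exists_retraction_of_fiber (hT : Triangle.mk u v δ ∈ distTriang C)
    (hTK : Triangle.mk k b l ∈ distTriang C) (hb : DY.g ≫ b = v ≫ DZ.g)
    (hr₁ : r ≫ k = u ≫ DY.g) (hr₂ : δ ≫ r⟦(1 : ℤ)⟧' = DZ.g ≫ l) :
    ∃ χ : K ⟶ DX.B, r ≫ χ = DX.g := by
  have hvδ : v ≫ δ = 0 := comp_distTriang_mor_zero₂₃ _ hT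
  obtain ⟨m, hm⟩ := exists_mor₂_comp_eq DZ.distinguished (δ ≫ DX.g⟦(1 : ℤ)⟧')
    (w.hom_eq_zero (show i < i + 2 by omega) DZ.A_mem_wle (w.shift_mem_wge_s5 DX.B_mem_wge 1) _)
  have hbm : b ≫ m = 0 := by
    obtain ⟨η, hη⟩ := exists_mor₃_comp_eq DY.distinguished (b ≫ m)
      (by rw [reassoc_of% hb, hm, reassoc_of% hvδ, zero_comp])
    rw [← hη, w.hom_eq_zero (show i + 1 < i + 2 by omega) (w.shift_mem_wle DY.A_mem_wle 1)
      (w.shift_mem_wge_s5 DX.B_mem_wge 1) η, comp_zero]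
  obtain ⟨x', hx'⟩ := exists_mor₃_comp_eq hTK m hbm
  obtain ⟨x, rfl⟩ := (shiftFunctor C (1 : ℤ)).map_surjective x'
  obtain ⟨ξ, hξ⟩ := exists_mor₁_comp_eq hT (DX.g - r ≫ x) <| by
    rw [Functor.map_sub, Preadditive.comp_sub, Functor.map_comp, reassoc_of% hr₂, hx', hm,
      sub_self]
  obtain ⟨ξ', rfl⟩ := exists_mor₂_comp_eq DY.distinguished ξ
    (w.hom_eq_zero (lt_add_one i) DY.A_mem_wle DX.B_mem_wge _)
  refine ⟨x + k ≫ ξ', ?_⟩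
  rw [Preadditive.comp_add, reassoc_of% hr₁, hξ, add_sub_cancel]

lemma fiber_mem_tle (hT : Triangle.mk u v δ ∈ distTriang C) (hX : X ∈ t.le)
    (hTK : Triangle.mk k b l ∈ distTriang C) (hb : DY.g ≫ b = v ≫ DZ.g) : K ∈ t.tle 0 :=
  t.mem_tle_zero_of_epi hTK DY.B_mem_tle fun _ hW s hs =>
    t.eq_zero_of_mor₂_comp_eq_zero DZ.distinguished DZ.A_mem_tle hW <|
      t.eq_zero_of_mor₂_comp_eq_zero hT (t.mem_tle_zero hX) hW <| by
        rw [← Category.assoc, ← hb, Category.assoc, hs, comp_zero]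

end WeightHigh

theorem exists_distTriang_wge_parts (hT : Triangle.mk u v δ ∈ distTriang C) (hX : X ∈ t.le)
    {a : DX.B ⟶ DY.B} {b : DY.B ⟶ DZ.B} (ha : DX.g ≫ a = u ≫ DY.g)
    (hb : DY.g ≫ b = v ≫ DZ.g) :
    ∃ c : DZ.B ⟶ DX.B⟦(1 : ℤ)⟧, Triangle.mk a b c ∈ distTriang C := by
  obtain ⟨K, k, l, hTK⟩ := distinguished_cocone_triangle₁ b
  obtain ⟨r, hr₁, hr₂⟩ : ∃ r : X ⟶ K, u ≫ DY.g = r ≫ k ∧ δ ≫ r⟦(1 : ℤ)⟧' = DZ.g ≫ l :=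
    complete_distinguished_triangle_morphism₁ _ _ hT hTK DY.g DZ.g hb.symm
  obtain ⟨φ, hφ⟩ := exists_desc_of_fiber (DX := DX) hTK hr₁.symm
  obtain ⟨χ, hχ⟩ := exists_retraction_of_fiber hT hTK hb hr₁.symm hr₂
  have hφk : φ ≫ k = a := t.cancel_mor₂ DX.distinguished DX.A_mem_tle DY.B_mem_tge
    (by rw [← Category.assoc, hφ, ← hr₁, ha])
  have hφχ : φ ≫ χ = 𝟙 _ := t.cancel_mor₂ DX.distinguished DX.A_mem_tle DX.B_mem_tge
    (by rw [← Category.assoc, hφ, hχ, Category.comp_id])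
  have hχφ : χ ≫ φ = 𝟙 K := by
    refine t.cancel_mor₁ hTK DZ.B_mem_tge (fiber_mem_tle hT hX hTK hb) (sub_eq_zero.mp ?_)
    refine eq_zero_of_fiber_comp_eq_zero hT hTK hb hr₁.symm hr₂ DY.B_mem_heart.2 DY.B_mem_wge ?_
    simp only [Preadditive.comp_sub, ← Category.assoc, hχ, hφ, Category.comp_id, sub_self]
  exact ⟨_, distTriang_of_iso₁ hTK ⟨φ, χ, hφχ, hχφ⟩ hφk⟩

end WT

namespace WT

variable (C : Type u) [Category.{v} C] [Preadditive C] [HasZeroObject C]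
  [HasShift C ℤ] [∀ n : ℤ, (shiftFunctor C n).Additive] [Pretriangulated C]
variable [HasBinaryBiproducts C]

/-- Proposition 1.1(II1, II2): under condition (iv), the inclusion
`Heart(t) ∩ C^{w≤i} → Heart(t)` has a right adjoint `W_{≤i}`, the inclusion
`Heart(t) ∩ C^{w≥i+1} → Heart(t)` has a left adjoint `W_{≥i+1}` given by
`X ↦ X/W_{≤i}X`, and the composites with the inclusions are exact endofunctors of the
heart. -/
theorem weight_filtration_adjoints (w : BoundedWeightStructure C)
    (t : BoundedTStructure C) (h4 : ConditionIV w t) (i : ℤ) :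
    ∃ (Wle : Heart t ⥤ ObjectProperty.FullSubcategory (fun X : C => X ∈ t.heart ∧ X ∈ w.wle i))
      (Wge : Heart t ⥤ ObjectProperty.FullSubcategory (fun X : C => X ∈ t.heart ∧ X ∈ w.wge (i + 1)))
      (adjle : ObjectProperty.ιOfLE (fun X hX => hX.1) ⊣ Wle)
      (adjge : Wge ⊣ ObjectProperty.ιOfLE (fun X hX => hX.1)),
      HeartExact t (Wle ⋙ ObjectProperty.ιOfLE (fun X hX => hX.1)) ∧
      HeartExact t (Wge ⋙ ObjectProperty.ιOfLE (fun X hX => hX.1)) ∧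
      ∀ X : Heart t, HeartSES t (homC (adjle.counit.app X)) (homC (adjge.unit.app X)) := by
  let D := h4.decomposition i
  have hε (T : ObjectProperty.FullSubcategory (fun X : C => X ∈ t.heart ∧ X ∈ w.wle i)) X :=
    (D X).comp_f_bijective T.property.1.1 T.property.2
  have hη X (T : ObjectProperty.FullSubcategory (fun X : C => X ∈ t.heart ∧ X ∈ w.wge (i + 1))) :=
    (D X).g_comp_bijective T.property.1.2 T.property.2
  let R X : ObjectProperty.FullSubcategory (fun X : C => X ∈ t.heart ∧ X ∈ w.wle i) :=
    ⟨(D X).A, (D X).A_mem_heart, (D X).A_mem_wle⟩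
  let L X : ObjectProperty.FullSubcategory (fun X : C => X ∈ t.heart ∧ X ∈ w.wge (i + 1)) :=
    ⟨(D X).B, (D X).B_mem_heart, (D X).B_mem_wge⟩
  refine ⟨_, _, coreflectionAdjunction _ R (fun X => (D X).f) hε,
    reflectionAdjunction _ L (fun X => (D X).g) hη, ?_, ?_, fun X => ?_⟩
  · rintro X Y Z u v ⟨-, -, hZ, δ, hT⟩
    have hR {X' Y' : Heart t} (u' : X' ⟶ Y') :=
      coreflector_map_hom_comp (fun X hX => hX.1) R (fun X => (D X).f) hε u'
    obtain ⟨c, hc⟩ := exists_distTriang_wle_parts hT hZ.2 (hR u) (hR v)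
    exact ⟨(D X).A_mem_heart, (D Y).A_mem_heart, (D Z).A_mem_heart, c, hc⟩
  · rintro X Y Z u v ⟨hX, -, -, δ, hT⟩
    have hL {X' Y' : Heart t} (u' : X' ⟶ Y') :=
      comp_reflector_map_hom (fun X hX => hX.1) L (fun X => (D X).g) hη u'
    obtain ⟨c, hc⟩ := exists_distTriang_wge_parts hT hX.1 (hL u) (hL v)
    exact ⟨(D X).B_mem_heart, (D Y).B_mem_heart, (D Z).B_mem_heart, c, hc⟩
  · rw [homC, coreflectionAdjunction_counit_app_hom, homC, reflectionAdjunction_unit_app_hom]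
    exact ⟨(D X).A_mem_heart, X.property, (D X).B_mem_heart, (D X).h, (D X).distinguished⟩

end WT
end

section
/- Let C be a triangulated category carrying a bounded weight structure w and a bounded t-structure t satisfying condition (iv) of Theorem 1.1 (for every X ∈ Heart(t) and every i ∈ ℤ there exists a nice weight decomposition of X at level i). Let W_{≤i} be the right adjoint to the inclusion Heart(t) ∩ C^{w≤i} → Heart(t), W_{≥i}X := X / W_{≤i−1}X, and Gr_jX := W_{≥j}(W_{≤j}X). Then for every X ∈ Heart(t) and every i ∈ ℤ: X ∈ C^{w≤i} if and only if Gr_jX = 0 for all j > i, and X ∈ C^{w≥i} if and only if Gr_jX = 0 for all j < i. -/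
open CategoryTheory CategoryTheory.Limits CategoryTheory.Pretriangulated

universe v u

/-!
The short exact sequence `0 → W_{≤j-1}Y → Y → W_{≥j}Y → 0` shows that `W_{≥j}Y = 0` iff the
counit `W_{≤j-1}Y → Y` is an isomorphism, i.e. iff `Y ∈ C^{w≤j-1}`; so `Gr_j X = 0` iff
`W_{≤j}X ∈ C^{w≤j-1}`. If `X ∈ C^{w≤j}` then `W_{≤j}X ≅ X`, so vanishing graded pieces above `i`
lower a weight bound of `X`, which exists by boundedness, step by step down to `i`.
Dually, `W_{≤j}X = 0` below a lower weight bound of `X`, and if `W_{≤j-1}X = 0` and `Gr_j X = 0`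
then the counit `W_{≤j}X → X` factors through `W_{≤j-1}X = 0`, so `W_{≤j}X = 0`. Once
`W_{≤i-1}X = 0`, the first map of a nice weight decomposition `A → X → B` at level `i - 1`
vanishes, so `X` is a retract of `B ∈ C^{w≥i}`.
-/

namespace WT

section Coreflection

variable {D : Type*} [Category D]

structure IsCoreflectionOnto (P : D → Prop) (R : D ⥤ D) (ε : R ⟶ 𝟭 D) : Prop where
  mem : ∀ X, P (R.obj X)
  existsUnique_lift : ∀ Y X, P Y → ∀ f : Y ⟶ X, ∃! g : Y ⟶ R.obj X, g ≫ ε.app X = f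

variable {P : D → Prop} {R : D ⥤ D} {ε : R ⟶ 𝟭 D}

namespace IsCoreflectionOnto

lemma lift_ext (hR : IsCoreflectionOnto P R ε) {Y X : D} (hY : P Y) {g g' : Y ⟶ R.obj X}
    (h : g ≫ ε.app X = g' ≫ ε.app X) : g = g' :=
  (hR.existsUnique_lift Y X hY _).unique h rfl

lemma isIso_app (hR : IsCoreflectionOnto P R ε) {Y : D} (hY : P Y) : IsIso (ε.app Y) := by
  obtain ⟨g, hg, -⟩ := hR.existsUnique_lift Y Y hY (𝟙 Y)
  refine ⟨g, hR.lift_ext (hR.mem Y) ?_, hg⟩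
  simp only [Category.assoc, hg, Functor.id_obj, Category.comp_id, Category.id_comp]

lemma isIso_app_iff (hR : IsCoreflectionOnto P R ε)
    (hP : ∀ ⦃Y Y' : D⦄, (Y ≅ Y') → P Y → P Y') (Y : D) : IsIso (ε.app Y) ↔ P Y :=
  ⟨fun _ => hP (asIso (ε.app Y)) (hR.mem Y), hR.isIso_app⟩

lemma isZero_obj_of_app_eq_zero [HasZeroMorphisms D] (hR : IsCoreflectionOnto P R ε) {X : D}
    (h : ε.app X = 0) : IsZero (R.obj X) := by
  rw [IsZero.iff_id_eq_zero]
  exact hR.lift_ext (hR.mem X) (by rw [h, Category.id_comp, zero_comp])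

lemma isZero_obj_iff [HasZeroMorphisms D] (hR : IsCoreflectionOnto P R ε) (X : D) :
    IsZero (R.obj X) ↔ ∀ Y, P Y → ∀ f : Y ⟶ X, f = 0 := by
  refine ⟨fun hX Y hY f => ?_, fun h => hR.isZero_obj_of_app_eq_zero (h _ (hR.mem X) _)⟩
  obtain ⟨g, hg, -⟩ := hR.existsUnique_lift Y X hY f
  rw [← hg, hX.eq_of_tgt g 0, zero_comp]

end IsCoreflectionOnto

end Coreflection

lemma mem_shiftClass_of_iso_s7 {C : Type u} [Category.{v} C] [HasShift C ℤ] {D : Set C} {n : ℤ}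
    {X Y : C} (e : X ≅ Y) (hX : X ∈ shiftClass C D n) : Y ∈ shiftClass C D n := by
  obtain ⟨Z, hZ, ⟨e'⟩⟩ := hX
  exact ⟨Z, hZ, ⟨e.symm ≪≫ e'⟩⟩

variable {C : Type u} [Category.{v} C] [Preadditive C] [HasZeroObject C]
  [HasShift C ℤ] [∀ n : ℤ, (shiftFunctor C n).Additive] [Pretriangulated C]

section Heart

variable {t : BoundedTStructure C}

lemma isZero_heart_iff (X : Heart t) : IsZero X ↔ IsZero X.obj :=
  ⟨(ObjectProperty.ι _).map_isZero, IsZero.of_full_of_faithful_of_isZero (ObjectProperty.ι _) X⟩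

lemma HeartSES.isZero_iff_isIso {X Y Z : Heart t} {f : X ⟶ Y} {g : Y ⟶ Z}
    (h : HeartSES t (homC f) (homC g)) : IsZero Z ↔ IsIso f := by
  obtain ⟨-, -, -, δ, hT⟩ := h
  rw [isZero_heart_iff, ← isIso_iff_of_reflects_iso f (ObjectProperty.ι _)]
  exact Triangle.isZero₃_iff_isIso₁ _ hT

end Heart

section WeightStructure

variable [HasBinaryBiproducts C] (w : BoundedWeightStructure C)

lemma BoundedWeightStructure.mem_wle_of_isZero (k : ℤ) {Z : C} (hZ : IsZero Z) :
    Z ∈ w.wle k := by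
  obtain ⟨A, -, -, -, -, -, hA, -⟩ := w.decomp Z
  exact ⟨Z, w.le_retract ⟨0, 0, hZ.eq_of_src _ _⟩ hA,
    ⟨hZ.iso ((shiftFunctor C k).map_isZero hZ)⟩⟩

lemma BoundedWeightStructure.wle_mono {i j : ℤ} (h : i ≤ j) : w.wle i ⊆ w.wle j := by
  induction j, h using Int.leInduction with
  | base => exact subset_rfl
  | succ n _ hn =>
    intro X hX
    obtain ⟨Y, hY, ⟨e⟩⟩ := hn hX
    exact ⟨Y⟦(-1 : ℤ)⟧, w.le_shift Y hY,
      ⟨e ≪≫ (shiftFunctorAdd' C (-1) (n + 1) n (by ring)).app Y⟩⟩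

lemma BoundedWeightStructure.wge_anti {i j : ℤ} (h : j ≤ i) : w.wge i ⊆ w.wge j := by
  induction i, h using Int.leInduction with
  | base => exact subset_rfl
  | succ n _ hn =>
    rintro X ⟨Y, hY, ⟨e⟩⟩
    exact hn ⟨Y⟦(1 : ℤ)⟧, w.ge_shift Y hY,
      ⟨e ≪≫ (shiftFunctorAdd' C 1 n (n + 1) (by ring)).app Y⟩⟩

lemma BoundedWeightStructure.mem_wge_of_retract {X B : C} {s : X ⟶ B} {r : B ⟶ X}
    (hsr : s ≫ r = 𝟙 X) {i : ℤ} (hB : B ∈ w.wge i) : X ∈ w.wge i := by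
  obtain ⟨B', hB', ⟨eB⟩⟩ := hB
  let u : (B⟦(-i : ℤ)⟧ : C) ≅ B' :=
    (shiftFunctor C (-i)).mapIso eB ≪≫ (shiftFunctorCompIsoId C i (-i) (by ring)).app B'
  have hmem : (X⟦(-i : ℤ)⟧ : C) ∈ w.ge := by
    refine w.ge_retract ⟨(shiftFunctor C (-i)).map s ≫ u.hom,
      u.inv ≫ (shiftFunctor C (-i)).map r, ?_⟩ hB'
    rw [Category.assoc, u.hom_inv_id_assoc, ← Functor.map_comp, hsr, CategoryTheory.Functor.map_id]
  exact ⟨X⟦(-i : ℤ)⟧, hmem, ⟨((shiftFunctorCompIsoId C (-i) i (by ring)).app X).symm⟩⟩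

lemma BoundedWeightStructure.hom_eq_zero_s7 {i j : ℤ} (hij : i < j) {A B : C}
    (hA : A ∈ w.wle i) (hB : B ∈ w.wge j) (f : A ⟶ B) : f = 0 := by
  obtain ⟨A', hA', ⟨eA⟩⟩ := hA
  obtain ⟨B', hB', ⟨eB⟩⟩ := w.wge_anti (show i + 1 ≤ j by omega) hB
  -- shift `A'⟦i⟧ ⟶ B'⟦i + 1⟧` back by `-i` to land in the orthogonality axiom
  let a : ((A'⟦i⟧ : C)⟦(-i : ℤ)⟧ : C) ≅ A' := (shiftFunctorCompIsoId C i (-i) (by ring)).app A'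
  let b : ((B'⟦(i + 1 : ℤ)⟧ : C)⟦(-i : ℤ)⟧ : C) ≅ (B'⟦(1 : ℤ)⟧ : C) :=
    (shiftFunctorAdd' C (i + 1) (-i) 1 (by ring)).symm.app B'
  let f' : (A'⟦i⟧ : C) ⟶ (B'⟦(i + 1 : ℤ)⟧ : C) := eA.inv ≫ f ≫ eB.hom
  have hshift : (shiftFunctor C (-i)).map f' = 0 := by
    have h := w.orth A' hA' B' hB' (a.inv ≫ (shiftFunctor C (-i)).map f' ≫ b.hom)
    rw [← cancel_epi a.inv, ← cancel_mono b.hom, comp_zero, zero_comp, Category.assoc, h]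
  have hf' : f' = 0 := (shiftFunctor C (-i)).map_injective (by rw [hshift, Functor.map_zero])
  have hf : f = eA.hom ≫ f' ≫ eB.inv := by simp [f']
  rw [hf, hf', zero_comp, comp_zero]

end WeightStructure

section HeartWeights

variable [HasBinaryBiproducts C] {w : BoundedWeightStructure C} {t : BoundedTStructure C}

lemma mem_wle_of_iso {k : ℤ} {X Y : Heart t} (e : X ≅ Y) (hX : X.obj ∈ w.wle k) :
    Y.obj ∈ w.wle k :=
  mem_shiftClass_of_iso_s7 ((ObjectProperty.ι _).mapIso e) hX

section Coreflection

variable {k : ℤ} {R : Heart t ⥤ Heart t} {ε : R ⟶ 𝟭 (Heart t)}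

lemma isZero_obj_of_mem_wge (hR : IsCoreflectionOnto (fun Y : Heart t => Y.obj ∈ w.wle k) R ε)
    {X : Heart t} (hX : X.obj ∈ w.wge (k + 1)) : IsZero (R.obj X) :=
  hR.isZero_obj_of_app_eq_zero
    (InducedCategory.hom_ext (w.hom_eq_zero_s7 (by omega) (hR.mem X) hX (ε.app X).hom))

lemma isZero_obj_iff_mem_wle (hR : IsCoreflectionOnto (fun Y : Heart t => Y.obj ∈ w.wle k) R ε)
    {Q : Heart t ⥤ Heart t} {η : 𝟭 (Heart t) ⟶ Q}
    (hQ : ∀ X, HeartSES t (homC (ε.app X)) (homC (η.app X))) (X : Heart t) :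
    IsZero (Q.obj X) ↔ X.obj ∈ w.wle k :=
  (hQ X).isZero_iff_isIso.trans (hR.isIso_app_iff (fun _ _ => mem_wle_of_iso) X)

lemma mem_wge_of_isZero_obj {i : ℤ} (h4 : ConditionIV w t)
    (hR : IsCoreflectionOnto (fun Y : Heart t => Y.obj ∈ w.wle (i - 1)) R ε)
    {X : Heart t} (hX : IsZero (R.obj X)) : X.obj ∈ w.wge i := by
  obtain ⟨A, B, f, g, δ, hT, hA, hB, hAt, -, -⟩ := h4 X.obj X.property (i - 1)
  have hf : f = 0 := congrArg InducedCategory.Hom.hom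
    ((hR.isZero_obj_iff X).1 hX ⟨A, hAt⟩ hA (ObjectProperty.homMk f))
  obtain ⟨r, hr⟩ := Triangle.yoneda_exact₂ _ hT (𝟙 X.obj) (by change f ≫ _ = 0; rw [hf, zero_comp])
  exact w.mem_wge_of_retract hr.symm (w.wge_anti (by omega) hB)

end Coreflection

section Filtration

variable {Wle : ℤ → Heart t ⥤ Heart t} {ε : ∀ i : ℤ, Wle i ⟶ 𝟭 (Heart t)}
  {Wge : ℤ → Heart t ⥤ Heart t} {η : ∀ i : ℤ, 𝟭 (Heart t) ⟶ Wge i}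

lemma isZero_gr_iff_mem_wle_sub_one
    (hW : ∀ i, IsCoreflectionOnto (fun Y : Heart t => Y.obj ∈ w.wle i) (Wle i) (ε i))
    (hWge : ∀ i X, HeartSES t (homC ((ε (i - 1)).app X)) (homC ((η i).app X)))
    {j : ℤ} {X : Heart t} (hX : X.obj ∈ w.wle j) :
    IsZero ((Wge j).obj ((Wle j).obj X)) ↔ X.obj ∈ w.wle (j - 1) := by
  have := (hW j).isIso_app hX
  rw [isZero_obj_iff_mem_wle (hW (j - 1)) (hWge j)]
  exact ⟨mem_wle_of_iso (asIso ((ε j).app X)), mem_wle_of_iso (asIso ((ε j).app X)).symm⟩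

lemma mem_wle_of_forall_isZero_gr
    (hW : ∀ i, IsCoreflectionOnto (fun Y : Heart t => Y.obj ∈ w.wle i) (Wle i) (ε i))
    (hWge : ∀ i X, HeartSES t (homC ((ε (i - 1)).app X)) (homC ((η i).app X)))
    {i : ℤ} {X : Heart t} (hgr : ∀ j, i < j → IsZero ((Wge j).obj ((Wle j).obj X))) :
    X.obj ∈ w.wle i := by
  obtain ⟨N, hN⟩ := w.bounded_le X.obj
  suffices h : ∀ j, i ≤ j → X.obj ∈ w.wle j → X.obj ∈ w.wle i from
    h (max i N) (le_max_left i N) (w.wle_mono (le_max_right i N) hN)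
  intro j hij
  induction j, hij using Int.leInduction with
  | base => exact id
  | succ j _ ih =>
    intro hX
    apply ih
    simpa using (isZero_gr_iff_mem_wle_sub_one hW hWge hX).1 (hgr (j + 1) (by omega))

lemma isZero_Wle_obj_of_isZero_gr
    (hW : ∀ i, IsCoreflectionOnto (fun Y : Heart t => Y.obj ∈ w.wle i) (Wle i) (ε i))
    (hWge : ∀ i X, HeartSES t (homC ((ε (i - 1)).app X)) (homC ((η i).app X)))
    {j : ℤ} {X : Heart t} (hlow : IsZero ((Wle (j - 1)).obj X))
    (hgr : IsZero ((Wge j).obj ((Wle j).obj X))) : IsZero ((Wle j).obj X) :=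
  (hW j).isZero_obj_of_app_eq_zero (((hW (j - 1)).isZero_obj_iff X).1 hlow _
    ((isZero_obj_iff_mem_wle (hW (j - 1)) (hWge j) _).1 hgr) _)

lemma isZero_Wle_obj_of_forall_isZero_gr
    (hW : ∀ i, IsCoreflectionOnto (fun Y : Heart t => Y.obj ∈ w.wle i) (Wle i) (ε i))
    (hWge : ∀ i X, HeartSES t (homC ((ε (i - 1)).app X)) (homC ((η i).app X)))
    {i : ℤ} {X : Heart t} (hgr : ∀ j, j < i → IsZero ((Wge j).obj ((Wle j).obj X))) :
    IsZero ((Wle (i - 1)).obj X) := by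
  obtain ⟨M, hM⟩ := w.bounded_ge X.obj
  suffices h : ∀ j, min (M - 1) (i - 1) ≤ j → j ≤ i - 1 → IsZero ((Wle j).obj X) from
    h (i - 1) (min_le_right _ _) le_rfl
  intro j hj
  induction j, hj using Int.leInduction with
  | base => exact fun _ => isZero_obj_of_mem_wge (hW _) (w.wge_anti (by omega) hM)
  | succ j _ ih =>
    intro hji
    refine isZero_Wle_obj_of_isZero_gr hW hWge ?_ (hgr (j + 1) (by omega))
    simpa using ih (by omega)

end Filtration

end HeartWeights

end WT

namespace WT

variable (C : Type u) [Category.{v} C] [Preadditive C] [HasZeroObject C]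
  [HasShift C ℤ] [∀ n : ℤ, (shiftFunctor C n).Additive] [Pretriangulated C]
variable [HasBinaryBiproducts C]

/-- Proposition 1.1(III2): under condition (iv), for `X` in the heart of `t`,
`X ∈ C^{w≤i}` iff `Gr_j X = 0` for all `j > i`, and `X ∈ C^{w≥i}` iff `Gr_j X = 0`
for all `j < i`, where `Gr_j = W_{≥j} ∘ W_{≤j}`. -/
theorem weight_classes_via_graded_pieces (w : BoundedWeightStructure C)
    (t : BoundedTStructure C) (h4 : ConditionIV w t)
    (Wle : ℤ → (Heart t ⥤ Heart t)) (ε : ∀ i : ℤ, Wle i ⟶ 𝟭 (Heart t))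
    (hWleMem : ∀ (i : ℤ) (X : Heart t), ((Wle i).obj X).obj ∈ w.wle i)
    (hWleAdj : ∀ (i : ℤ) (Y X : Heart t), Y.obj ∈ w.wle i → ∀ f : Y ⟶ X,
      ∃! g : Y ⟶ (Wle i).obj X, g ≫ (ε i).app X = f)
    (Wge : ℤ → (Heart t ⥤ Heart t)) (η : ∀ i : ℤ, 𝟭 (Heart t) ⟶ Wge i)
    (hWge : ∀ (i : ℤ) (X : Heart t),
      HeartSES t (homC ((ε (i - 1)).app X)) (homC ((η i).app X)))
    (i : ℤ) (X : Heart t) :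
    (X.obj ∈ w.wle i ↔ ∀ j : ℤ, i < j → IsZero ((Wle j ⋙ Wge j).obj X)) ∧
    (X.obj ∈ w.wge i ↔ ∀ j : ℤ, j < i → IsZero ((Wle j ⋙ Wge j).obj X)) := by
  have hW : ∀ k, IsCoreflectionOnto (fun Y : Heart t => Y.obj ∈ w.wle k) (Wle k) (ε k) :=
    fun k => ⟨hWleMem k, hWleAdj k⟩
  refine ⟨⟨fun hX j hij => ?_, mem_wle_of_forall_isZero_gr hW hWge⟩,
    ⟨fun hX j hji => ?_, fun hgr => mem_wge_of_isZero_obj h4 (hW (i - 1))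
      (isZero_Wle_obj_of_forall_isZero_gr hW hWge hgr)⟩⟩
  · exact (isZero_gr_iff_mem_wle_sub_one hW hWge (w.wle_mono hij.le hX)).2
      (w.wle_mono (by omega) hX)
  · have hlow := isZero_obj_of_mem_wge (hW j) (w.wge_anti (show j + 1 ≤ i by omega) hX)
    exact (isZero_obj_iff_mem_wle (hW (j - 1)) (hWge j) _).2
      (w.mem_wle_of_isZero _ ((isZero_heart_iff _).1 hlow))

end WT
end

section
/- Let C be a pretriangulated category, A an abelian category, and H, W : C → A homological functors (additive functors sending every distinguished triangle X → Y → Z → X[1] to an exact sequence H(X) → H(Y) → H(Z)). Let ι : W ⟶ H be a natural transformation all of whose components ι_X : W(X) → H(X) are monomorphisms. Then for every morphism f : X → Y of C, one has the following equality of subobjects of H(Y): the image of the composite ι_Y ∘ W(f) equals the intersection (pullback) of the image of ι_Y with the image of H(f). (In particular, morphisms are strictly compatible with the filtration of H given by W.) -/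
open CategoryTheory CategoryTheory.Limits CategoryTheory.Pretriangulated

universe v u

namespace CategoryTheory

variable {𝒞 : Type*} [Category 𝒞]

namespace Limits

theorem imageSubobject_comp_mono [HasStrongEpiMonoFactorisations 𝒞] {X Y Z : 𝒞}
    (f : X ⟶ Y) (g : Y ⟶ Z) [Mono g] :
    imageSubobject (f ≫ g) = (Subobject.map g).obj (imageSubobject f) :=
  (Subobject.mk_eq_mk_of_comm _ _
    (image.isoStrongEpiMono (f := f ≫ g) (factorThruImage f) (image.ι f ≫ g)
      (image.fac_assoc f g)).symm (by simp)).trans (Subobject.map_mk _ _).symm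

theorem kernelSubobject_comp [HasZeroMorphisms 𝒞] [HasPullbacks 𝒞] {X Y Z : 𝒞}
    (f : X ⟶ Y) (g : Y ⟶ Z) [HasKernel g] [HasKernel (f ≫ g)] :
    kernelSubobject (f ≫ g) = (Subobject.pullback f).obj (kernelSubobject g) := by
  refine le_antisymm (Subobject.le_of_factors ?_) (Subobject.le_of_factors ?_)
  · rw [pullback_factors_iff, kernelSubobject_factors_iff, Category.assoc,
      kernelSubobject_arrow_comp]
  · rw [kernelSubobject_factors_iff, ← Category.assoc, ← kernelSubobject_factors_iff,
      ← pullback_factors_iff]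
    exact Subobject.factors_self _

end Limits

theorem Subobject.map_pullback_eq_mk_inf [HasPullbacks 𝒞] {X Y : 𝒞} (f : X ⟶ Y) [Mono f]
    (S : Subobject Y) :
    (Subobject.map f).obj ((Subobject.pullback f).obj S) = Subobject.mk f ⊓ S :=
  (Subobject.inf_eq_map_pullback' (MonoOver.mk f) S).symm

theorem ShortComplex.Exact.imageSubobject_comp_eq_inf {A : Type*} [Category A] [Abelian A]
    {S₁ S₂ : ShortComplex A} (hS₁ : S₁.Exact) (φ : S₁ ⟶ S₂) [Mono φ.τ₂] [Mono φ.τ₃] :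
    imageSubobject (S₁.f ≫ φ.τ₂) = imageSubobject φ.τ₂ ⊓ imageSubobject S₂.f := by
  refine le_antisymm (le_inf (imageSubobject_comp_le _ _) ?_) ?_
  · rw [← φ.comm₁₂]
    exact imageSubobject_comp_le _ _
  calc imageSubobject φ.τ₂ ⊓ imageSubobject S₂.f
      ≤ Subobject.mk φ.τ₂ ⊓ kernelSubobject S₂.g := by
        rw [imageSubobject_mono]
        exact inf_le_inf_left _ (image_le_kernel _ _ S₂.zero)
    _ = (Subobject.map φ.τ₂).obj ((Subobject.pullback φ.τ₂).obj (kernelSubobject S₂.g)) :=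
        (Subobject.map_pullback_eq_mk_inf _ _).symm
    _ = (Subobject.map φ.τ₂).obj (kernelSubobject S₁.g) := by
        rw [← kernelSubobject_comp, φ.comm₂₃, kernelSubobject_comp_mono]
    _ = imageSubobject (S₁.f ≫ φ.τ₂) := by
        rw [imageSubobject_comp_mono, S₁.exact_iff_image_eq_kernel.1 hS₁]

end CategoryTheory

namespace WT

variable (C : Type u) [Category.{v} C] [Preadditive C] [HasZeroObject C]
  [HasShift C ℤ] [∀ n : ℤ, (shiftFunctor C n).Additive] [Pretriangulated C]

/-- A homological functor: an additive functor sending distinguished triangles to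
exact sequences. -/
def IsHomologicalFunctor {A : Type*} [Category A] [Abelian A] (H : C ⥤ A) : Prop :=
  H.Additive ∧ ∀ T ∈ (distTriang C), ∃ h0 : H.map T.mor₁ ≫ H.map T.mor₂ = 0,
    (ShortComplex.mk (H.map T.mor₁) (H.map T.mor₂) h0).Exact

/-- Proposition 3.2(II2), key strictness assertion: if `W ⟶ H` is a monomorphism of
homological functors, then for any `f : X ⟶ Y` the image of `W(f)` composed with
`ι_Y` equals the intersection of the image of `ι_Y` with the image of `H(f)`:
morphisms are strictly compatible with the filtration of `H` by `W`. -/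
theorem strict_compatibility_of_filtration
    (A : Type*) [Category A] [Abelian A]
    (H W : C ⥤ A) (hH : IsHomologicalFunctor C H) (hW : IsHomologicalFunctor C W)
    (ι : W ⟶ H) (hmono : ∀ X : C, Mono (ι.app X))
    (X Y : C) (f : X ⟶ Y) :
    imageSubobject (W.map f ≫ ι.app Y) =
      imageSubobject (ι.app Y) ⊓ imageSubobject (H.map f) := by
  obtain ⟨Z, g, h, hT⟩ := distinguished_cocone_triangle f
  obtain ⟨hWzero, hWexact⟩ := hW.2 _ hT
  obtain ⟨hHzero, -⟩ := hH.2 _ hT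
  let φ : ShortComplex.mk _ _ hWzero ⟶ ShortComplex.mk _ _ hHzero :=
    { τ₁ := ι.app X, τ₂ := ι.app Y, τ₃ := ι.app Z
      comm₁₂ := (ι.naturality f).symm, comm₂₃ := (ι.naturality g).symm }
  have : Mono φ.τ₂ := hmono Y
  have : Mono φ.τ₃ := hmono Z
  exact hWexact.imageSubobject_comp_eq_inf φ

end WT
end
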